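/- arXiv:1402.1369 — 6 statements merged into one kernel-verified Lean document; each statement's English description precedes it below -/
import Mathlib

section
/- Let q ∈ ℂ with |q| ≠ 1 and q ≠ 0, let c ∈ ℂ, and let f : ℂ* → ℂ be a holomorphic function satisfying f(q·z) = c·f(z) for all z ∈ ℂ*. If f is not identically zero, then there exists an integer m ∈ ℤ such that c = qᵐ, and f(z) = f(1)·zᵐ for all z ∈ ℂ*. -/
open Complex

noncomputable section

open Set Bornology Function


lemma aux_periodic_const_aux {q : ℂ} (hq0 : q ≠ 0) (hq1 : ‖q‖ < 1)
    {F : ℂ → ℂ} (hF : DifferentiableOn ℂ F {z : ℂ | z ≠ 0})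
    (hper : ∀ z : ℂ, z ≠ 0 → F (q * z) = F z) :
    ∀ z : ℂ, z ≠ 0 → F z = F 1 := by
  set t : ℝ := ‖q‖ with ht
  have ht0 : 0 < t := norm_pos_iff.mpr hq0
  have hlt : Real.log t < 0 := Real.log_neg ht0 hq1
  -- periodicity for all integer powers
  have hk : ∀ k : ℤ, ∀ z : ℂ, z ≠ 0 → F (q ^ k * z) = F z := by
    intro k
    induction k using Int.induction_on with
    | zero => intro z hz; simp
    | succ n ih =>
        intro z hz
        have h1 : (q : ℂ) ^ ((n : ℤ) + 1) * z = q * (q ^ (n : ℤ) * z) := by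
          rw [zpow_add_one₀ hq0]; ring
        rw [h1, hper _ (mul_ne_zero (zpow_ne_zero _ hq0) hz), ih z hz]
    | pred n ih =>
        intro z hz
        have hw : (q : ℂ) ^ (-(n : ℤ) - 1) * z ≠ 0 := mul_ne_zero (zpow_ne_zero _ hq0) hz
        have h1 : q * (q ^ (-(n : ℤ) - 1) * z) = q ^ (-(n : ℤ)) * z := by
          rw [show (-(n:ℤ)) = (-(n:ℤ)-1) + 1 by ring, zpow_add_one₀ hq0]; ring
        have := hper _ hw
        rw [h1] at this
        rw [← this, ih z hz]
  -- scaling into the annulus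
  have hannulus : ∀ z : ℂ, z ≠ 0 → ∃ k : ℤ, t ≤ ‖q ^ k * z‖ ∧
      ‖q ^ k * z‖ ≤ 1 := by
    intro z hz
    have hr0 : 0 < ‖z‖ := norm_pos_iff.mpr hz
    set u : ℝ := Real.log ‖z‖ / Real.log t with hu
    refine ⟨⌈-u⌉, ?_⟩
    have habs : ‖q ^ (⌈-u⌉ : ℤ) * z‖ = t ^ (⌈-u⌉ : ℤ) * ‖z‖ := by
      rw [norm_mul, norm_zpow]
    have hexp : t ^ (⌈-u⌉ : ℤ) * ‖z‖
        = Real.exp ((⌈-u⌉ + u) * Real.log t) := by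
      rw [← Real.exp_log (zpow_pos ht0 _), ← Real.exp_log hr0, ← Real.exp_add,
        Real.log_zpow]
      congr 1
      have : u * Real.log t = Real.log ‖z‖ := by
        rw [hu, div_mul_cancel₀ _ (ne_of_lt hlt)]
      linarith [this]
    have h1 : -u ≤ (⌈-u⌉ : ℝ) := Int.le_ceil _
    have h2 : (⌈-u⌉ : ℝ) < -u + 1 := Int.ceil_lt_add_one _
    constructor
    · rw [habs, hexp]
      calc t = Real.exp (Real.log t) := (Real.exp_log ht0).symm
        _ ≤ _ := Real.exp_le_exp.2 (by nlinarith)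
    · rw [habs, hexp]
      calc Real.exp ((⌈-u⌉ + u) * Real.log t) ≤ Real.exp 0 :=
            Real.exp_le_exp.2 (by nlinarith)
        _ = 1 := Real.exp_zero
  -- bound on the annulus
  set A : Set ℂ := {z : ℂ | t ≤ ‖z‖ ∧ ‖z‖ ≤ 1} with hA
  have hAsub : A ⊆ {z : ℂ | z ≠ 0} := by
    rintro z ⟨h1, _⟩ rfl
    simp only [norm_zero] at h1
    linarith
  have hAcl : IsClosed A := by
    have h1 : IsClosed {z : ℂ | t ≤ ‖z‖} :=
      isClosed_le continuous_const continuous_norm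
    have h2 : IsClosed {z : ℂ | ‖z‖ ≤ 1} :=
      isClosed_le continuous_norm continuous_const
    exact (h1.inter h2)
  have hAcp : IsCompact A := by
    refine (isCompact_closedBall (0:ℂ) 1).of_isClosed_subset hAcl ?_
    intro z hzA
    simpa [Complex.dist_eq] using hzA.2
  obtain ⟨M, hM⟩ := hAcp.exists_bound_of_continuousOn
    ((hF.continuousOn).mono hAsub)
  -- global bound
  have hbd : ∀ z : ℂ, z ≠ 0 → ‖F z‖ ≤ M := by
    intro z hz
    obtain ⟨k, hk1, hk2⟩ := hannulus z hz
    have := hM (q ^ k * z) ⟨hk1, hk2⟩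
    rwa [hk k z hz] at this
  -- removable singularity and Liouville
  set G : ℂ → ℂ := update F 0 (Filter.limUnder (nhdsWithin 0 {(0:ℂ)}ᶜ) F) with hG
  have huniv : (univ : Set ℂ) \ {0} = {z : ℂ | z ≠ 0} := by ext z; simp
  have hGdiff : DifferentiableOn ℂ G univ := by
    apply Complex.differentiableOn_update_limUnder_of_bddAbove (Filter.univ_mem)
    · rw [huniv]; exact hF
    · refine ⟨max M ‖F 1‖, ?_⟩
      rintro x ⟨z, hz, rfl⟩
      rw [huniv] at hz
      exact le_max_of_le_left (hbd z hz)
  have hGd : Differentiable ℂ G := differentiableOn_univ.mp hGdiff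
  have hGbd : IsBounded (range G) := by
    rw [isBounded_iff_forall_norm_le]
    refine ⟨max M ‖G 0‖, ?_⟩
    rintro x ⟨z, rfl⟩
    rcases eq_or_ne z 0 with rfl | hz
    · exact le_max_right _ _
    · rw [hG, update_of_ne hz]
      exact le_max_of_le_left (hbd z hz)
  intro z hz
  have := hGd.apply_eq_apply_of_bounded hGbd z 1
  rwa [hG, update_of_ne hz, update_of_ne one_ne_zero] at this

lemma aux_periodic_const {q : ℂ} (hq0 : q ≠ 0) (hq : ‖q‖ ≠ 1)
    {F : ℂ → ℂ} (hF : DifferentiableOn ℂ F {z : ℂ | z ≠ 0})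
    (hper : ∀ z : ℂ, z ≠ 0 → F (q * z) = F z) :
    ∀ z : ℂ, z ≠ 0 → F z = F 1 := by
  rcases lt_or_gt_of_ne hq with h | h
  · exact aux_periodic_const_aux hq0 h hF hper
  · have hq0' : q⁻¹ ≠ 0 := inv_ne_zero hq0
    have h' : ‖q⁻¹‖ < 1 := by
      rw [norm_inv]
      rw [inv_lt_one_iff₀]
      right; exact h
    refine aux_periodic_const_aux hq0' h' hF ?_
    intro z hz
    have hz' : q⁻¹ * z ≠ 0 := mul_ne_zero hq0' hz
    have := hper _ hz'
    rw [show q * (q⁻¹ * z) = z by field_simp] at this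
    exact this.symm

/-- Let `q ∈ ℂ*` with `|q| ≠ 1` and let `f : ℂ* → ℂ` be holomorphic with
`f(qz) = c·f(z)` for all `z ∈ ℂ*`.  If `f` is not identically zero, then `c = qᵐ` for some
integer `m`, and `f(z) = f(1)·zᵐ` on `ℂ*`.  (Sections of degree-zero line bundles on the
elliptic curve `ℂ*/qℤ`.) -/
theorem quasi_periodic_is_monomial (q c : ℂ) (hq0 : q ≠ 0) (hq : ‖q‖ ≠ 1)
    (f : ℂ → ℂ) (hf : DifferentiableOn ℂ f {z : ℂ | z ≠ 0})
    (heq : ∀ z : ℂ, z ≠ 0 → f (q * z) = c * f z)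
    (hne : ∃ z : ℂ, z ≠ 0 ∧ f z ≠ 0) :
    ∃ m : ℤ, c = q ^ m ∧ ∀ z : ℂ, z ≠ 0 → f z = f 1 * z ^ m := by
  obtain ⟨z₀, hz₀, hfz₀⟩ := hne
  -- c ≠ 0
  have hc0 : c ≠ 0 := by
    intro hc
    apply hfz₀
    have h := heq (q⁻¹ * z₀) (mul_ne_zero (inv_ne_zero hq0) hz₀)
    rw [show q * (q⁻¹ * z₀) = z₀ by field_simp, hc, zero_mul] at h
    exact h
  have hopen : IsOpen {z : ℂ | z ≠ 0} := isOpen_ne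
  -- step 1: f(az) f(a/z) = f(a)^2
  have key1 : ∀ a z : ℂ, a ≠ 0 → z ≠ 0 → f (a * z) * f (a / z) = f a * f a := by
    intro a z ha hz
    set F : ℂ → ℂ := fun w => f (a * w) * f (a / w) with hF
    have hFdiff : DifferentiableOn ℂ F {z : ℂ | z ≠ 0} := by
      apply DifferentiableOn.mul
      · exact hf.comp ((differentiable_const a).differentiableOn.mul differentiableOn_id)
          (fun w hw => mul_ne_zero ha hw)
      · exact hf.comp ((differentiable_const a).differentiableOn.div differentiableOn_id
          (fun w hw => hw)) (fun w hw => div_ne_zero ha hw)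
    have hFper : ∀ w : ℂ, w ≠ 0 → F (q * w) = F w := by
      intro w hw
      have h1 : f (a * (q * w)) = c * f (a * w) := by
        rw [show a * (q * w) = q * (a * w) by ring]
        exact heq _ (mul_ne_zero ha hw)
      have h2 : f (a / w) = c * f (a / (q * w)) := by
        have := heq (a / (q * w)) (div_ne_zero ha (mul_ne_zero hq0 hw))
        rwa [show q * (a / (q * w)) = a / w by field_simp] at this
      show f (a * (q * w)) * f (a / (q * w)) = f (a * w) * f (a / w)
      rw [h1, h2]; ring
    have := aux_periodic_const hq0 hq hFdiff hFper z hz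
    rw [hF] at this
    simpa using this
  -- step 2: f u * f v = f (u v) * f 1
  have key2 : ∀ u v : ℂ, u ≠ 0 → v ≠ 0 → f u * f v = f (u * v) * f 1 := by
    intro u v hu hv
    set a : ℂ := Complex.exp (Complex.log (u * v) / 2) with haa
    have ha : a ≠ 0 := Complex.exp_ne_zero _
    have ha2 : a * a = u * v := by
      rw [haa, ← Complex.exp_add, show Complex.log (u*v)/2 + Complex.log (u*v)/2
        = Complex.log (u*v) by ring, Complex.exp_log (mul_ne_zero hu hv)]
    have hz : u / a ≠ 0 := div_ne_zero hu ha
    have e1 := key1 a (u / a) ha hz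
    rw [show a * (u / a) = u by field_simp, show a / (u / a) = v by
      field_simp; linear_combination ha2] at e1
    have e2 := key1 a a ha ha
    rw [ha2, show a / a = 1 by field_simp] at e2
    rw [e1, e2]
  -- f 1 ≠ 0
  have hf1 : f 1 ≠ 0 := by
    intro h1
    apply hfz₀
    have := key2 z₀ z₀ hz₀ hz₀
    rw [h1, mul_zero] at this
    exact mul_self_eq_zero.mp this
  -- the character g
  set g : ℂ → ℂ := fun z => f z / f 1 with hg
  have hgdiff : DifferentiableOn ℂ g {z : ℂ | z ≠ 0} := hf.div_const _
  have hgAt : ∀ z : ℂ, z ≠ 0 → DifferentiableAt ℂ g z := fun z hz =>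
    hgdiff.differentiableAt (hopen.mem_nhds hz)
  have hg1 : g 1 = 1 := by rw [hg]; field_simp
  have hgmul : ∀ u v : ℂ, u ≠ 0 → v ≠ 0 → g (u * v) = g u * g v := by
    intro u v hu hv
    show f (u * v) / f 1 = f u / f 1 * (f v / f 1)
    field_simp
    linear_combination (key2 u v hu hv).symm
  set a : ℂ := deriv g 1 with haD
  -- z g'(z) = a g(z)
  have hode : ∀ z : ℂ, z ≠ 0 → z * deriv g z = a * g z := by
    intro z hz
    have h1 : HasDerivAt (fun u : ℂ => g (u * z)) (deriv g z * z) 1 := by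
      have hinner : HasDerivAt (fun u : ℂ => u * z) z 1 := hasDerivAt_mul_const z
      have houter : HasDerivAt g (deriv g z) ((1:ℂ) * z) := by
        rw [one_mul]; exact (hgAt z hz).hasDerivAt
      exact houter.comp 1 hinner
    have h2 : HasDerivAt (fun u : ℂ => g u * g z) (a * g z) 1 :=
      ((hgAt 1 one_ne_zero).hasDerivAt).mul_const (g z)
    have hEE : (fun u : ℂ => g (u * z)) =ᶠ[nhds 1] (fun u : ℂ => g u * g z) := by
      filter_upwards [hopen.mem_nhds (one_ne_zero (α := ℂ))] with u hu
      exact hgmul u z hu hz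
    have h2' : HasDerivAt (fun u : ℂ => g (u * z)) (a * g z) 1 :=
      h2.congr_of_eventuallyEq hEE
    have := h1.unique h2'
    rw [← this]; ring
  -- G(w) = g(exp w) exp(-a w) is constant 1
  set G : ℂ → ℂ := fun w => g (Complex.exp w) * Complex.exp (-a * w) with hGdef
  have hGder : ∀ w : ℂ, HasDerivAt G 0 w := by
    intro w
    have e1 : HasDerivAt (fun w : ℂ => g (Complex.exp w))
        (deriv g (Complex.exp w) * Complex.exp w) w :=
      ((hgAt _ (Complex.exp_ne_zero w)).hasDerivAt).comp w (Complex.hasDerivAt_exp w)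
    have e2 : HasDerivAt (fun w : ℂ => Complex.exp (-a * w))
        (Complex.exp (-a * w) * (-a)) w := by
      have hl : HasDerivAt (fun w : ℂ => -a * w) (-a) w := by
        simpa using (hasDerivAt_id w).const_mul (-a)
      exact (Complex.hasDerivAt_exp (-a * w)).comp w hl
    have : HasDerivAt G (deriv g (Complex.exp w) * Complex.exp w * Complex.exp (-a * w)
        + g (Complex.exp w) * (Complex.exp (-a * w) * -a)) w := e1.mul e2
    convert this using 1
    have hkey := hode (Complex.exp w) (Complex.exp_ne_zero w)
    linear_combination (-(Complex.exp (-a * w))) * hkey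
  have hGdiff : Differentiable ℂ G := fun w => (hGder w).differentiableAt
  have hGfd : ∀ w : ℂ, fderiv ℂ G w = 0 := by
    intro w
    have := (hGder w).hasFDerivAt.fderiv
    rw [this]
    ext x
    simp
  have hGconst : ∀ w : ℂ, G w = 1 := by
    intro w
    have := is_const_of_fderiv_eq_zero hGdiff hGfd w 0
    rw [this, hGdef]
    simp [hg1]
  have hgexp : ∀ w : ℂ, g (Complex.exp w) = Complex.exp (a * w) := by
    intro w
    have this' : g (Complex.exp w) * Complex.exp (-a * w) = 1 := hGconst w
    have h2 : Complex.exp (-a * w) * Complex.exp (a * w) = 1 := by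
      rw [← Complex.exp_add]; simp
    calc g (Complex.exp w) = g (Complex.exp w) * (Complex.exp (-a*w) * Complex.exp (a*w)) := by
          rw [h2, mul_one]
      _ = (g (Complex.exp w) * Complex.exp (-a*w)) * Complex.exp (a*w) := by ring
      _ = Complex.exp (a * w) := by rw [this', one_mul]
  -- a is an integer
  have hexp1 : Complex.exp (a * (2 * Real.pi * I)) = 1 := by
    rw [← hgexp]
    rw [Complex.exp_two_pi_mul_I, hg1]
  obtain ⟨m, hm⟩ := Complex.exp_eq_one_iff.mp hexp1
  have h2pi : (2 * (Real.pi : ℂ) * I) ≠ 0 := by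
    simp [Real.pi_ne_zero, Complex.I_ne_zero]
  have ham : a = (m : ℂ) := by
    field_simp at hm
    exact hm
  -- g z = z ^ m
  have hgz : ∀ z : ℂ, z ≠ 0 → g z = z ^ m := by
    intro z hz
    have := hgexp (Complex.log z)
    rw [Complex.exp_log hz, ham, Complex.exp_int_mul] at this
    rw [this, Complex.exp_log hz]
  refine ⟨m, ?_, ?_⟩
  · have := heq 1 one_ne_zero
    rw [mul_one] at this
    have hgq : g q = c := by
      show f q / f 1 = c
      rw [this]; field_simp
    rw [← hgq, hgz q hq0]
  · intro z hz
    have h' : f z / f 1 = z ^ m := hgz z hz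
    field_simp at h'
    rw [h']
end
end

section
/- Let n ≥ 1, let q ∈ ℂ with |q| ≠ 1 and q ≠ 0, let a₁, …, aₙ ∈ ℂ* and let a = diag(a₁,…,aₙ). Let g : ℂ* → Matrix(n,n,ℂ) be a holomorphic matrix-valued map satisfying g(z)·a = a·g(q⁻¹·z) for all z ∈ ℂ*. Then for every pair of indices (i,j): if there exists an integer m ∈ ℤ with aᵢ = qᵐ·aⱼ (such m is unique), then the (i,j) entry satisfies g(z)ᵢⱼ = g(1)ᵢⱼ·zᵐ for all z ∈ ℂ*; and if aᵢ/aⱼ is not an integer power of q, then g(z)ᵢⱼ = 0 for all z ∈ ℂ*. -/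
open Matrix Complex

noncomputable section

namespace CentralizerAux

lemma iter_pow (q lam : ℂ) (f : ℂ → ℂ) (hq : q ≠ 0)
    (hfe : ∀ z : ℂ, z ≠ 0 → f (q⁻¹ * z) = lam * f z) :
    ∀ (k : ℕ) (z : ℂ), z ≠ 0 → f ((q⁻¹) ^ k * z) = lam ^ k * f z := by
  intro k
  induction k with
  | zero => intro z hz; simp
  | succ k ih =>
    intro z hz
    have hne : (q⁻¹) ^ k * z ≠ 0 := mul_ne_zero (pow_ne_zero _ (inv_ne_zero hq)) hz
    have h1 : (q⁻¹) ^ (k + 1) * z = q⁻¹ * ((q⁻¹) ^ k * z) := by ring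
    rw [h1, hfe _ hne, ih z hz, pow_succ]
    ring

lemma iter_zpow (q lam : ℂ) (f : ℂ → ℂ) (hq : q ≠ 0) (hlam : lam ≠ 0)
    (hfe : ∀ z : ℂ, z ≠ 0 → f (q⁻¹ * z) = lam * f z) :
    ∀ (k : ℤ) (z : ℂ), z ≠ 0 → f z = lam ^ k * f (q ^ k * z) := by
  intro k z hz
  cases k with
  | ofNat n =>
    have hz' : q ^ (n : ℕ) * z ≠ 0 := mul_ne_zero (pow_ne_zero _ hq) hz
    have := iter_pow q lam f hq hfe n (q ^ (n : ℕ) * z) hz'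
    have heq : (q⁻¹) ^ n * (q ^ (n : ℕ) * z) = z := by
      rw [← mul_assoc, ← mul_pow, inv_mul_cancel₀ hq, one_pow, one_mul]
    rw [heq] at this
    rw [this]
    simp [Int.ofNat_eq_coe, zpow_natCast]
  | negSucc n =>
    have := iter_pow q lam f hq hfe (n + 1) z hz
    have hqk : (q : ℂ) ^ (Int.negSucc n) = (q⁻¹) ^ (n + 1) := by
      rw [zpow_negSucc, inv_pow]
    have hlk : (lam : ℂ) ^ (Int.negSucc n) = (lam ^ (n + 1))⁻¹ := by
      rw [zpow_negSucc]
    rw [hqk, hlk, this]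
    have : lam ^ (n + 1) ≠ 0 := pow_ne_zero _ hlam
    field_simp

/-- choose an integer exponent bringing `z` into the fundamental annulus. -/
lemma exists_exp (q : ℂ) (hq1 : 1 < ‖q‖) (z : ℂ) (hz : z ≠ 0) :
    ∃ k : ℤ, 1 ≤ ‖q ^ k * z‖ ∧ ‖q ^ k * z‖ ≤ ‖q‖ ∧
      (‖z‖ ≤ 1 → 0 ≤ k) ∧ (1 ≤ ‖z‖ → k ≤ 0) := by
  set Q := ‖q‖ with hQ
  have hQ0 : (0:ℝ) < Q := lt_trans one_pos hq1
  have hr0 : (0:ℝ) < ‖z‖ := by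
    simpa [norm_pos_iff] using hz
  set r := ‖z‖ with hr
  have hlogQ : 0 < Real.log Q := Real.log_pos hq1
  set t : ℝ := (-Real.log r) / Real.log Q with ht
  refine ⟨⌈t⌉, ?_, ?_, ?_, ?_⟩
  · have h1 : t ≤ (⌈t⌉ : ℝ) := Int.le_ceil t
    have h2 : -Real.log r ≤ (⌈t⌉ : ℝ) * Real.log Q := by
      rw [ht] at h1
      calc -Real.log r = (-Real.log r) / Real.log Q * Real.log Q := by
            field_simp
        _ ≤ (⌈t⌉ : ℝ) * Real.log Q := by
            exact mul_le_mul_of_nonneg_right h1 hlogQ.le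
    have hpos : (0:ℝ) < Q ^ (⌈t⌉ : ℤ) * r := mul_pos (zpow_pos hQ0 _) hr0
    rw [norm_mul, norm_zpow]
    rw [← Real.log_nonneg_iff hpos, Real.log_mul (ne_of_gt (zpow_pos hQ0 _)) hr0.ne',
      Real.log_zpow]
    linarith
  · have h1 : (⌈t⌉ : ℝ) < t + 1 := Int.ceil_lt_add_one t
    have h2 : (⌈t⌉ : ℝ) * Real.log Q < -Real.log r + Real.log Q := by
      have := (mul_lt_mul_of_pos_right h1 hlogQ)
      rw [ht] at this
      calc (⌈t⌉ : ℝ) * Real.log Q < ((-Real.log r) / Real.log Q + 1) * Real.log Q := this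
        _ = -Real.log r + Real.log Q := by field_simp
    have hpos : (0:ℝ) < Q ^ (⌈t⌉ : ℤ) * r := mul_pos (zpow_pos hQ0 _) hr0
    rw [norm_mul, norm_zpow]
    have : Real.log (Q ^ (⌈t⌉ : ℤ) * r) < Real.log Q := by
      rw [Real.log_mul (ne_of_gt (zpow_pos hQ0 _)) hr0.ne', Real.log_zpow]
      linarith
    exact le_of_lt ((Real.log_lt_log_iff hpos hQ0).mp this)
  · intro hle
    have hlogr : Real.log r ≤ 0 := Real.log_nonpos hr0.le hle
    have : (0:ℝ) ≤ t := div_nonneg (by linarith) hlogQ.le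
    have h := le_trans this (Int.le_ceil t)
    exact_mod_cast h
  · intro hge
    have hlogr : 0 ≤ Real.log r := Real.log_nonneg hge
    have : t ≤ 0 := div_nonpos_of_nonpos_of_nonneg (by linarith) hlogQ.le
    exact Int.ceil_le.mpr (by simpa using this)


/-- bound on the fundamental annulus. -/
lemma annulus_bound (q : ℂ) (hq1 : 1 < ‖q‖) (f : ℂ → ℂ)
    (hf : ContinuousOn f {z : ℂ | z ≠ 0}) :
    ∃ M : ℝ, ∀ w : ℂ, 1 ≤ ‖w‖ → ‖w‖ ≤ ‖q‖ →
      ‖f w‖ ≤ M := by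
  set A : Set ℂ := {w : ℂ | 1 ≤ ‖w‖ ∧ ‖w‖ ≤ ‖q‖} with hA
  have hsub : A ⊆ {z : ℂ | z ≠ 0} := by
    intro w hw
    have : (0:ℝ) < ‖w‖ := lt_of_lt_of_le one_pos hw.1
    simpa [norm_pos_iff] using this
  have hclosed : IsClosed A := by
    have : A = (fun w : ℂ => ‖w‖) ⁻¹' (Set.Icc 1 (‖q‖)) := by
      ext w; simp [hA, Set.mem_Icc]
    rw [this]
    exact IsClosed.preimage continuous_norm isClosed_Icc
  have hcpt : IsCompact A := by
    refine (isCompact_closedBall (0:ℂ) (‖q‖)).of_isClosed_subset hclosed ?_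
    intro w hw
    simpa [Metric.mem_closedBall, Complex.dist_eq] using hw.2
  obtain ⟨C, hC⟩ := hcpt.exists_bound_of_continuousOn (hf.mono hsub)
  exact ⟨C, fun w h1 h2 => by simpa using hC w ⟨h1, h2⟩⟩

/-- if `|lam| ≤ 1`, `f` is bounded on the punctured unit disk. -/
lemma bound_small (q lam : ℂ) (hq1 : 1 < ‖q‖) (hlam0 : lam ≠ 0)
    (hlam : ‖lam‖ ≤ 1) (f : ℂ → ℂ)
    (hfe : ∀ z : ℂ, z ≠ 0 → f (q⁻¹ * z) = lam * f z)
    (M : ℝ) (hM : ∀ w : ℂ, 1 ≤ ‖w‖ → ‖w‖ ≤ ‖q‖ →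
      ‖f w‖ ≤ M) :
    ∀ z : ℂ, z ≠ 0 → ‖z‖ ≤ 1 → ‖f z‖ ≤ M := by
  have hq0 : q ≠ 0 := by
    intro h; rw [h] at hq1; simp at hq1; linarith
  intro z hz hz1
  obtain ⟨k, h1, h2, h3, _⟩ := exists_exp q hq1 z hz
  have hk : 0 ≤ k := h3 hz1
  have hzk : q ^ k * z ≠ 0 := mul_ne_zero (zpow_ne_zero _ hq0) hz
  have heq := iter_zpow q lam f hq0 hlam0 hfe k z hz
  have hMpos : 0 ≤ M := le_trans (norm_nonneg _) (hM _ h1 h2)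
  calc ‖f z‖ = ‖lam‖ ^ k * ‖f (q ^ k * z)‖ := by
        rw [heq, norm_mul, norm_zpow]
    _ ≤ 1 * M := by
        refine mul_le_mul ?_ (hM _ h1 h2) (norm_nonneg _) one_pos.le
        exact zpow_le_one₀ (norm_pos_iff.mpr hlam0) hlam hk
    _ = M := one_mul M

/-- if `|lam| ≥ 1`, `f` is bounded outside the unit disk. -/
lemma bound_large (q lam : ℂ) (hq1 : 1 < ‖q‖) (hlam0 : lam ≠ 0)
    (hlam : 1 ≤ ‖lam‖) (f : ℂ → ℂ)
    (hfe : ∀ z : ℂ, z ≠ 0 → f (q⁻¹ * z) = lam * f z)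
    (M : ℝ) (hM : ∀ w : ℂ, 1 ≤ ‖w‖ → ‖w‖ ≤ ‖q‖ →
      ‖f w‖ ≤ M) :
    ∀ z : ℂ, 1 ≤ ‖z‖ → ‖f z‖ ≤ M := by
  have hq0 : q ≠ 0 := by
    intro h; rw [h] at hq1; simp at hq1; linarith
  intro z hz1
  have hz : z ≠ 0 := by
    intro h; rw [h] at hz1; simp at hz1; linarith
  obtain ⟨k, h1, h2, _, h4⟩ := exists_exp q hq1 z hz
  have hk : k ≤ 0 := h4 hz1
  have heq := iter_zpow q lam f hq0 hlam0 hfe k z hz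
  calc ‖f z‖ = ‖lam‖ ^ k * ‖f (q ^ k * z)‖ := by
        rw [heq, norm_mul, norm_zpow]
    _ ≤ 1 * M := by
        refine mul_le_mul ?_ (hM _ h1 h2) (norm_nonneg _) one_pos.le
        exact zpow_le_one_of_nonpos₀ hlam hk
    _ = M := one_mul M

/-- Liouville step: an entire function satisfying `F(q⁻¹ z) = mu F(z)` with `|mu| ≥ 1` is
constant. -/
lemma const_of (q mu : ℂ) (hq1 : 1 < ‖q‖) (hmu0 : mu ≠ 0)
    (hmu : 1 ≤ ‖mu‖) (F : ℂ → ℂ) (hF : Differentiable ℂ F)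
    (hFe : ∀ z : ℂ, z ≠ 0 → F (q⁻¹ * z) = mu * F z) :
    ∀ z : ℂ, F z = F 1 := by
  obtain ⟨M, hM⟩ := annulus_bound q hq1 F (hF.continuous.continuousOn)
  have hout : ∀ z : ℂ, 1 ≤ ‖z‖ → ‖F z‖ ≤ M :=
    bound_large q mu hq1 hmu0 hmu F hFe M hM
  obtain ⟨C, hC⟩ := (isCompact_closedBall (0:ℂ) 1).exists_bound_of_continuousOn
    (hF.continuous.continuousOn)
  have hbdd : Bornology.IsBounded (Set.range F) := by
    rw [isBounded_iff_forall_norm_le]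
    refine ⟨max M C, ?_⟩
    rintro x ⟨z, rfl⟩
    rcases le_total (‖z‖) 1 with h | h
    · exact le_trans (hC z (by simpa [Metric.mem_closedBall, Complex.dist_eq] using h))
        (le_max_right _ _)
    · exact le_trans (hout z h) (le_max_left _ _)
  intro z
  exact hF.apply_eq_apply_of_bounded hbdd z 1


lemma scalar_core (q c : ℂ) (hq1 : 1 < ‖q‖) (hc : c ≠ 0)
    (f : ℂ → ℂ) (hf : DifferentiableOn ℂ f {z : ℂ | z ≠ 0})
    (hfe : ∀ z : ℂ, z ≠ 0 → f (q⁻¹ * z) = c * f z) :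
    (∃ m : ℤ, c = q ^ (-m) ∧ ∀ z : ℂ, z ≠ 0 → f z = f 1 * z ^ m) ∨
      (∀ z : ℂ, z ≠ 0 → f z = 0) := by
  have hq0 : q ≠ 0 := by
    intro h; rw [h] at hq1; simp at hq1; linarith
  set Q : ℝ := ‖q‖ with hQdef
  have hQ0 : (0:ℝ) < Q := lt_trans one_pos hq1
  have hlogQ : 0 < Real.log Q := Real.log_pos hq1
  have hc0 : (0:ℝ) < ‖c‖ := norm_pos_iff.mpr hc
  -- choose m₀ the largest integer with |c| Q^m₀ ≤ 1
  set m₀ : ℤ := ⌊(-Real.log (‖c‖)) / Real.log Q⌋ with hm₀def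
  have hle : ‖c‖ * Q ^ m₀ ≤ 1 := by
    have h1 : (m₀ : ℝ) ≤ (-Real.log (‖c‖)) / Real.log Q := Int.floor_le _
    have h2 : (m₀ : ℝ) * Real.log Q ≤ -Real.log (‖c‖) := by
      calc (m₀ : ℝ) * Real.log Q
          ≤ (-Real.log (‖c‖)) / Real.log Q * Real.log Q :=
            mul_le_mul_of_nonneg_right h1 hlogQ.le
        _ = -Real.log (‖c‖) := by field_simp
    have hpos : (0:ℝ) < ‖c‖ * Q ^ m₀ := mul_pos hc0 (zpow_pos hQ0 _)
    rw [← Real.log_nonpos_iff hpos.le, Real.log_mul hc0.ne' (ne_of_gt (zpow_pos hQ0 _)),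
      Real.log_zpow]
    linarith
  have hgt : 1 < ‖c‖ * Q ^ (m₀ + 1) := by
    have h1 : (-Real.log (‖c‖)) / Real.log Q < (m₀ : ℝ) + 1 :=
      Int.lt_floor_add_one _
    have h2 : -Real.log (‖c‖) < ((m₀ : ℝ) + 1) * Real.log Q := by
      calc -Real.log (‖c‖)
          = (-Real.log (‖c‖)) / Real.log Q * Real.log Q := by field_simp
        _ < ((m₀ : ℝ) + 1) * Real.log Q := mul_lt_mul_of_pos_right h1 hlogQ
    have hpos : (0:ℝ) < ‖c‖ * Q ^ (m₀ + 1) := mul_pos hc0 (zpow_pos hQ0 _)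
    have : 0 < Real.log (‖c‖ * Q ^ (m₀ + 1)) := by
      rw [Real.log_mul hc0.ne' (ne_of_gt (zpow_pos hQ0 _)), Real.log_zpow]
      push_cast
      linarith
    nlinarith [(Real.log_nonpos_iff hpos.le).mpr, Real.log_nonpos hpos.le,
      (Real.log_pos_iff hpos.le).mp this]
  set lam : ℂ := c * q ^ m₀ with hlamdef
  have hlam0 : lam ≠ 0 := mul_ne_zero hc (zpow_ne_zero _ hq0)
  have habslam : ‖lam‖ = ‖c‖ * Q ^ m₀ := by
    rw [hlamdef, norm_mul, norm_zpow]
  have hlamle : ‖lam‖ ≤ 1 := by rw [habslam]; exact hle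
  -- the twisted function h z = f z * z ^ (-m₀)
  set h : ℂ → ℂ := fun z => f z * z ^ (-m₀) with hhdef
  have hh : DifferentiableOn ℂ h {z : ℂ | z ≠ 0} := by
    intro z hz
    exact ((hf z hz).mul
      (((differentiableAt_zpow.mpr (Or.inl hz)).differentiableWithinAt)))
  have hhe : ∀ z : ℂ, z ≠ 0 → h (q⁻¹ * z) = lam * h z := by
    intro z hz
    have : (q⁻¹ * z) ^ (-m₀) = q ^ m₀ * z ^ (-m₀) := by
      rw [mul_zpow, _root_.inv_zpow, ← _root_.zpow_neg, neg_neg]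
    rw [hhdef]
    simp only []
    rw [hfe z hz, this, hlamdef]
    ring
  -- bounds
  obtain ⟨M, hM⟩ := annulus_bound q hq1 h hh.continuousOn
  have hsmall := bound_small q lam hq1 hlam0 hlamle h hhe M hM
  -- removable singularity: extend h to an entire function H
  set H : ℂ → ℂ := Function.update h 0 (Filter.limUnder (nhdsWithin 0 {(0:ℂ)}ᶜ) h) with hHdef
  have hHeq : ∀ z : ℂ, z ≠ 0 → H z = h z := fun z hz => Function.update_of_ne hz _ _
  have hHball : DifferentiableOn ℂ H (Metric.ball (0:ℂ) 1) := by
    refine Complex.differentiableOn_update_limUnder_of_bddAbove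
      (Metric.ball_mem_nhds 0 one_pos) ?_ ?_
    · refine hh.mono ?_
      rintro z ⟨_, hz⟩
      simpa using hz
    · rw [bddAbove_def]
      refine ⟨M, ?_⟩
      rintro y ⟨z, ⟨hz1, hz2⟩, rfl⟩
      have hz0 : z ≠ 0 := by simpa using hz2
      have : ‖z‖ ≤ 1 := by
        have := Metric.mem_ball.mp hz1
        rw [Complex.dist_eq] at this
        simpa using this.le
      simpa using hsmall z hz0 this
  have hH : Differentiable ℂ H := by
    intro z
    by_cases hz : z = 0
    · subst hz
      exact hHball.differentiableAt (Metric.ball_mem_nhds 0 one_pos)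
    · have hopen : {w : ℂ | w ≠ 0} ∈ nhds z := by
        refine IsOpen.mem_nhds ?_ hz
        exact isOpen_compl_singleton
      have hd : DifferentiableAt ℂ h z := (hh z hz).differentiableAt hopen
      refine hd.congr_of_eventuallyEq ?_
      filter_upwards [hopen] with w hw
      exact hHeq w hw
  have hHe : ∀ z : ℂ, z ≠ 0 → H (q⁻¹ * z) = lam * H z := by
    intro z hz
    rw [hHeq _ (mul_ne_zero (inv_ne_zero hq0) hz), hHeq z hz]
    exact hhe z hz
  have hone : (1:ℂ) ≠ 0 := one_ne_zero
  have hH1 : H 1 = f 1 := by rw [hHeq 1 hone, hhdef]; simp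
  by_cases habs : ‖lam‖ = 1
  · -- |lam| = 1 : H is constant
    have hconst := const_of q lam hq1 hlam0 habs.ge H hH hHe
    have hrel : H 1 = lam * H 1 := by
      have h1 := hHe 1 hone
      rw [hconst (q⁻¹ * 1)] at h1
      exact h1
    by_cases hlam1 : lam = 1
    · left
      refine ⟨m₀, ?_, ?_⟩
      · rw [_root_.zpow_neg]
        have h1 : c * q ^ m₀ = 1 := hlam1
        exact eq_inv_of_mul_eq_one_right (by linear_combination h1)
      · intro z hz
        have h1 : h z = f 1 := by rw [← hHeq z hz, hconst z, hH1]
        have h2 : f z * z ^ (-m₀) = f 1 := h1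
        have h3 : z ^ (-m₀) * z ^ m₀ = 1 := by
          rw [← zpow_add₀ hz]; simp
        calc f z = f z * (z ^ (-m₀) * z ^ m₀) := by rw [h3, mul_one]
          _ = (f z * z ^ (-m₀)) * z ^ m₀ := by ring
          _ = f 1 * z ^ m₀ := by rw [h2]
    · right
      intro z hz
      have hH10 : H 1 = 0 := by
        have : (1 - lam) * H 1 = 0 := by linear_combination hrel
        rcases mul_eq_zero.mp this with h | h
        · exact absurd (by linear_combination -h : lam = 1) hlam1
        · exact h
      have h1 : h z = 0 := by rw [← hHeq z hz, hconst z, hH10]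
      have h2 : f z * z ^ (-m₀) = 0 := h1
      rcases mul_eq_zero.mp h2 with h | h
      · exact h
      · exact absurd h (zpow_ne_zero _ hz)
  · -- |lam| < 1
    right
    have hlamlt : ‖lam‖ < 1 := lt_of_le_of_ne hlamle habs
    have hlam1 : lam ≠ 1 := by
      intro h; rw [h] at hlamlt; simp at hlamlt
    -- H 0 = 0
    have hH0 : H 0 = 0 := by
      have hcont : ∀ z : ℂ, H (q⁻¹ * z) = lam * H z := by
        have hc1 : Continuous fun z : ℂ => H (q⁻¹ * z) :=
          hH.continuous.comp (continuous_const.mul continuous_id)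
        have hc2 : Continuous fun z : ℂ => lam * H z :=
          continuous_const.mul hH.continuous
        have hdense : Dense {z : ℂ | z ≠ 0} := dense_compl_singleton 0
        have := Continuous.ext_on hdense hc1 hc2 (fun z hz => hHe z hz)
        exact fun z => congrFun this z
      have := hcont 0
      rw [mul_zero] at this
      have h0 : (1 - lam) * H 0 = 0 := by linear_combination this
      rcases mul_eq_zero.mp h0 with h | h
      · exact absurd (by linear_combination -h : lam = 1) hlam1
      · exact h
    set G : ℂ → ℂ := dslope H 0 with hGdef
    have hG : Differentiable ℂ G := by
      rw [← differentiableOn_univ] at hH ⊢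
      exact (Complex.differentiableOn_dslope (by simp : Set.univ ∈ nhds (0:ℂ))).mpr hH
    have hGz : ∀ z : ℂ, z ≠ 0 → G z = z⁻¹ * H z := by
      intro z hz
      rw [hGdef, dslope_of_ne _ hz, slope_def_field, hH0]
      field_simp
      ring
    set mu : ℂ := lam * q with hmudef
    have hmu0 : mu ≠ 0 := mul_ne_zero hlam0 hq0
    have habsmu : 1 < ‖mu‖ := by
      rw [hmudef, norm_mul, habslam]
      calc (1:ℝ) < ‖c‖ * Q ^ (m₀ + 1) := hgt
        _ = ‖c‖ * Q ^ m₀ * ‖q‖ := by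
            rw [zpow_add₀ hQ0.ne' m₀ 1, zpow_one]; ring
    have hmu1 : mu ≠ 1 := by
      intro h; rw [h] at habsmu; simp at habsmu
    have hGe : ∀ z : ℂ, z ≠ 0 → G (q⁻¹ * z) = mu * G z := by
      intro z hz
      have hz' : q⁻¹ * z ≠ 0 := mul_ne_zero (inv_ne_zero hq0) hz
      rw [hGz _ hz', hGz _ hz, hHe z hz, mul_inv, inv_inv, hmudef]
      ring
    have hconst := const_of q mu hq1 hmu0 habsmu.le G hG hGe
    have hG10 : G 1 = 0 := by
      have h1 := hGe 1 hone
      rw [hconst (q⁻¹ * 1)] at h1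
      have h0 : (1 - mu) * G 1 = 0 := by linear_combination h1
      rcases mul_eq_zero.mp h0 with h | h
      · exact absurd (by linear_combination -h : mu = 1) hmu1
      · exact h
    intro z hz
    have hGz0 : G z = 0 := by rw [hconst z, hG10]
    have : z⁻¹ * H z = 0 := by rw [← hGz z hz, hGz0]
    have hHz : H z = 0 := by
      rcases mul_eq_zero.mp this with h | h
      · exact absurd h (inv_ne_zero hz)
      · exact h
    have h2 : f z * z ^ (-m₀) = 0 := by
      have hh0 : h z = 0 := by rw [hHeq z hz] at hHz; exact hHz
      exact hh0
    rcases mul_eq_zero.mp h2 with h | h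
    · exact h
    · exact absurd h (zpow_ne_zero _ hz)


lemma scalar_main (q c : ℂ) (hq0 : q ≠ 0) (hq : ‖q‖ ≠ 1) (hc : c ≠ 0)
    (f : ℂ → ℂ) (hf : DifferentiableOn ℂ f {z : ℂ | z ≠ 0})
    (hfe : ∀ z : ℂ, z ≠ 0 → f (q⁻¹ * z) = c * f z) :
    (∃ m : ℤ, c = q ^ (-m) ∧ ∀ z : ℂ, z ≠ 0 → f z = f 1 * z ^ m) ∨
      (∀ z : ℂ, z ≠ 0 → f z = 0) := by
  rcases lt_or_gt_of_ne hq with hlt | hgt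
  · have hpos : 0 < ‖q‖ := norm_pos_iff.mpr hq0
    have hq1 : 1 < ‖q⁻¹‖ := by
      rw [norm_inv]
      exact (one_lt_inv₀ hpos).mpr hlt
    have hfe' : ∀ z : ℂ, z ≠ 0 → f ((q⁻¹)⁻¹ * z) = c⁻¹ * f z := by
      intro z hz
      have h1 := hfe (q * z) (mul_ne_zero hq0 hz)
      have h2 : q⁻¹ * (q * z) = z := by field_simp
      rw [h2] at h1
      rw [inv_inv, h1]
      field_simp
    rcases scalar_core q⁻¹ c⁻¹ hq1 (inv_ne_zero hc) f hf hfe' with ⟨m, hm, hfz⟩ | h0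
    · left
      refine ⟨m, ?_, hfz⟩
      have h3 : (q⁻¹ : ℂ) ^ (-m) = (q ^ (-m))⁻¹ := _root_.inv_zpow q (-m)
      rw [h3] at hm
      exact inv_injective hm
    · right; exact h0
  · exact scalar_core q c hgt hc f hf hfe

end CentralizerAux

/-- Let `q ∈ ℂ*` with `|q| ≠ 1`, let `a = diag(a₁,…,aₙ)` with `aᵢ ∈ ℂ*`, and let
`g : ℂ* → Mat(n,ℂ)` be a holomorphic matrix-valued map with
`g(z)·a = a·g(q⁻¹z)` on `ℂ*` (i.e. `(g,1)` centralizes `(a,q)` in `LGL(n) ⋊ ℂ*`).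
Then for all `i,j`: if `aᵢ = qᵐ·aⱼ` for an integer `m`, then `g(z)ᵢⱼ = g(1)ᵢⱼ·zᵐ` on `ℂ*`;
and if `aᵢ/aⱼ` is not an integer power of `q`, then `g(z)ᵢⱼ = 0` on `ℂ*`. -/
theorem centralizer_entries (n : ℕ) (hn : 0 < n) (q : ℂ) (hq0 : q ≠ 0)
    (hq : ‖q‖ ≠ 1) (a : Fin n → ℂ) (ha : ∀ i, a i ≠ 0)
    (g : ℂ → Matrix (Fin n) (Fin n) ℂ)
    (hg : ∀ i j, DifferentiableOn ℂ (fun z => g z i j) {z : ℂ | z ≠ 0})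
    (hcomm : ∀ z : ℂ, z ≠ 0 →
      g z * Matrix.diagonal a = Matrix.diagonal a * g (q⁻¹ * z)) :
    ∀ i j : Fin n,
      (∀ m : ℤ, a i = q ^ m * a j → ∀ z : ℂ, z ≠ 0 → g z i j = g 1 i j * z ^ m) ∧
      ((∀ m : ℤ, a i ≠ q ^ m * a j) → ∀ z : ℂ, z ≠ 0 → g z i j = 0) := by

  intro i j
  set f : ℂ → ℂ := fun z => g z i j with hfdef
  set c : ℂ := a j * (a i)⁻¹ with hcdef
  have hc : c ≠ 0 := mul_ne_zero (ha j) (inv_ne_zero (ha i))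
  have hfe : ∀ z : ℂ, z ≠ 0 → f (q⁻¹ * z) = c * f z := by
    intro z hz
    have h1 : (g z * Matrix.diagonal a) i j = (Matrix.diagonal a * g (q⁻¹ * z)) i j := by
      rw [hcomm z hz]
    rw [Matrix.mul_diagonal, Matrix.diagonal_mul] at h1
    show g (q⁻¹ * z) i j = a j * (a i)⁻¹ * g z i j
    have h2 : g (q⁻¹ * z) i j = (a i)⁻¹ * (g z i j * a j) := by
      rw [h1, ← mul_assoc, inv_mul_cancel₀ (ha i), one_mul]
    rw [h2]; ring
  have hzpow_inj : ∀ s t : ℤ, q ^ s = q ^ t → s = t := by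
    intro s t hst
    have h1 : ‖q‖ ^ s = ‖q‖ ^ t := by
      rw [← norm_zpow, ← norm_zpow, hst]
    exact zpow_right_injective₀ (norm_pos_iff.mpr hq0) hq h1
  rcases CentralizerAux.scalar_main q c hq0 hq hc f (hg i j) hfe with ⟨m₀, hm₀, hfz⟩ | h0
  · constructor
    · intro m hm z hz
      -- from a i = q ^ m * a j we get c = q ^ (-m)
      have hcm : c = q ^ (-m) := by
        rw [hcdef, hm, _root_.zpow_neg, mul_inv]
        rw [mul_comm (q ^ m)⁻¹ (a j)⁻¹, ← mul_assoc, mul_inv_cancel₀ (ha j), one_mul]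
      have : m = m₀ := by
        have := hzpow_inj (-m) (-m₀) (by rw [← hcm, ← hm₀])
        omega
      rw [this]
      exact hfz z hz
    · intro hno
      exfalso
      apply hno m₀
      -- c = q ^ (-m₀) gives a i = q ^ m₀ * a j
      have h1 : a j * (a i)⁻¹ = (q ^ m₀)⁻¹ := by
        rw [← _root_.zpow_neg]; exact hm₀
      have hqm : (q : ℂ) ^ m₀ ≠ 0 := zpow_ne_zero _ hq0
      field_simp at h1
      rw [div_eq_one_iff_eq (ha i)] at h1
      linear_combination -h1
  · have hf1 : f 1 = 0 := h0 1 one_ne_zero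
    constructor
    · intro m hm z hz
      show f z = f 1 * z ^ m
      rw [h0 z hz, hf1, zero_mul]
    · intro _ z hz
      exact h0 z hz
end
end

section
/- Let n ≥ 1, let q ∈ ℂ with |q| ≠ 1 and q ≠ 0, let a₁, …, aₙ ∈ ℂ*, and let a = diag(a₁,…,aₙ). Let Z = {g ∈ LGL(n) : g(z)·a = a·g(q⁻¹·z) for all z ∈ ℂ*} (the centralizer of (a,q) in LGL(n)). Then Z is a subgroup of LGL(n), the evaluation map ev₁ : Z → GL(n,ℂ), g ↦ g(1), is an injective group homomorphism, and its image is exactly the subgroup {x ∈ GL(n,ℂ) : xᵢⱼ = 0 whenever aᵢ/aⱼ is not an integer power of q}. In particular the image contains all invertible diagonal matrices. -/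
open Matrix Complex

noncomputable section

/-- A holomorphic loop with values in `GL(n,ℂ)`: a map `ℂ* → Mat(n,ℂ)` whose entries are
holomorphic on `ℂ* = ℂ \ {0}` and whose values are invertible. -/
def IsHolLoop (n : ℕ) (g : ℂ → Matrix (Fin n) (Fin n) ℂ) : Prop :=
  (∀ i j, DifferentiableOn ℂ (fun z => g z i j) {z : ℂ | z ≠ 0}) ∧
  ∀ z : ℂ, z ≠ 0 → IsUnit (g z)

/-- Membership in the centralizer `Z` of `(diag(a), q)` in `LGL(n)`:
holomorphic `GL(n,ℂ)`-valued loops `g` with `g(z)·diag(a) = diag(a)·g(q⁻¹z)` on `ℂ*`. -/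
def InZ (n : ℕ) (q : ℂ) (a : Fin n → ℂ) (g : ℂ → Matrix (Fin n) (Fin n) ℂ) : Prop :=
  IsHolLoop n g ∧
  ∀ z : ℂ, z ≠ 0 → g z * Matrix.diagonal a = Matrix.diagonal a * g (q⁻¹ * z)


open Filter Set Asymptotics Metric Bornology Topology

section Analytic


/-- Extend a holomorphic function on ℂ* with `f z * z → 0` at `0` to an entire function. -/
lemma extendPunct (f : ℂ → ℂ) (hf : DifferentiableOn ℂ f {z : ℂ | z ≠ 0})
    (ho : Tendsto (fun z => f z * z) (𝓝[≠] (0:ℂ)) (𝓝 0)) :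
    ∃ F : ℂ → ℂ, Differentiable ℂ F ∧ (∀ z : ℂ, z ≠ 0 → F z = f z) ∧
      Tendsto f (𝓝[≠] 0) (𝓝 (F 0)) := by
  have hset : {z : ℂ | z ≠ 0} = (univ : Set ℂ) \ {0} := by
    ext z; simp [Set.mem_diff]
  have hlo : (fun z => f z - f 0) =o[𝓝[≠] (0:ℂ)] fun z => (z - 0)⁻¹ := by
    rw [Asymptotics.isLittleO_iff_tendsto']
    · have h1 : Tendsto (fun z : ℂ => (f z - f 0) * z) (𝓝[≠] 0) (𝓝 0) := by
        have h2 : Tendsto (fun z : ℂ => f 0 * z) (𝓝[≠] 0) (𝓝 0) := by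
          have h3 : Tendsto (fun z : ℂ => z) (𝓝[≠] 0) (𝓝 0) :=
            tendsto_nhdsWithin_of_tendsto_nhds tendsto_id
          simpa using h3.const_mul (f 0)
        have := ho.sub h2
        simp only [sub_zero] at this ⊢
        refine this.congr fun z => by ring
      refine h1.congr (fun z => ?_)
      rw [div_inv_eq_mul]; ring_nf
    · filter_upwards [self_mem_nhdsWithin] with z hz h0
      exact absurd (by simpa using h0) hz
  have hd : DifferentiableOn ℂ f ((univ : Set ℂ) \ {0}) := by rwa [← hset]
  have key := Complex.differentiableOn_update_limUnder_of_isLittleO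
    (univ_mem : (univ : Set ℂ) ∈ 𝓝 0) hd hlo
  refine ⟨Function.update f 0 (limUnder (𝓝[≠] 0) f), differentiableOn_univ.mp key,
    fun z hz => Function.update_of_ne hz _ _, ?_⟩
  have hten : Tendsto f (𝓝[≠] (0:ℂ)) (𝓝 (limUnder (𝓝[≠] 0) f)) := by
    apply Complex.tendsto_limUnder_of_differentiable_on_punctured_nhds_of_isLittleO _ hlo
    filter_upwards [self_mem_nhdsWithin] with z hz
    exact (hf.differentiableAt (isOpen_ne.mem_nhds hz))
  simpa [Function.update_self] using hten

/-- Liouville for a function bounded outside a ball. -/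
lemma const_of_bound (F : ℂ → ℂ) (hF : Differentiable ℂ F) (C : ℝ)
    (hb : ∀ z : ℂ, 1 ≤ ‖z‖ → ‖F z‖ ≤ C) :
    ∀ z w : ℂ, F z = F w := by
  obtain ⟨M, hM⟩ := (isCompact_closedBall (0:ℂ) 1).exists_bound_of_continuousOn
    hF.continuous.continuousOn
  have hbdd : IsBounded (range F) := by
    rw [isBounded_iff_forall_norm_le]
    refine ⟨max C M, ?_⟩
    rintro y ⟨z, rfl⟩
    rcases le_or_gt 1 (‖z‖) with h | h
    · exact le_max_of_le_left (hb z h)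
    · exact le_max_of_le_right (hM z (by simpa [Metric.mem_closedBall, Complex.dist_eq] using h.le))
  exact fun z w => hF.apply_eq_apply_of_bounded hbdd z w


lemma iterate_rel (q c : ℂ) (hq0 : q ≠ 0) (hc : c ≠ 0) (f : ℂ → ℂ)
    (heq : ∀ z : ℂ, z ≠ 0 → f (q⁻¹ * z) = c * f z) :
    ∀ m : ℤ, ∀ z : ℂ, z ≠ 0 → f (q ^ (-m) * z) = c ^ m * f z := by
  intro m
  induction m using Int.induction_on with
  | zero => intro z hz; simp
  | succ n ih =>
    intro z hz
    have h1 : q ^ (-(n+1:ℤ)) * z = q⁻¹ * (q ^ (-(n:ℤ)) * z) := by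
      have h2 : (-(n+1:ℤ)) = -1 + (-(n:ℤ)) := by ring
      rw [h2, zpow_add₀ hq0, mul_assoc]; norm_num
    have hz2 : q ^ (-(n:ℤ)) * z ≠ 0 := mul_ne_zero (zpow_ne_zero _ hq0) hz
    rw [h1, heq _ hz2, ih z hz, zpow_add_one₀ hc]; ring
  | pred n ih =>
    intro z hz
    have hz' : q ^ ((n:ℤ)+1) * z ≠ 0 := mul_ne_zero (zpow_ne_zero _ hq0) hz
    have h3 := heq _ hz'
    have h4 : q⁻¹ * (q ^ ((n:ℤ)+1) * z) = q ^ (-(-(n:ℤ))) * z := by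
      rw [neg_neg, zpow_add_one₀ hq0]; field_simp
    rw [h4] at h3
    rw [ih z hz] at h3
    have h5 : (-(-(n:ℤ)-1)) = (n:ℤ)+1 := by ring
    rw [h5]
    have h6 : f (q ^ ((n:ℤ)+1) * z) = c⁻¹ * (c ^ (-(n:ℤ)) * f z) := by
      rw [h3, ← mul_assoc, inv_mul_cancel₀ hc, one_mul]
    rw [h6, zpow_sub_one₀ hc]; ring

lemma growth_bound (q c : ℂ) (hq1 : 1 < ‖q‖) (hc : c ≠ 0) (t : ℝ)
    (ht : t = Real.log (‖c‖) / Real.log (‖q‖))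
    (f : ℂ → ℂ) (hf : DifferentiableOn ℂ f {z : ℂ | z ≠ 0})
    (heq : ∀ z : ℂ, z ≠ 0 → f (q⁻¹ * z) = c * f z) :
    ∃ C : ℝ, 0 ≤ C ∧ ∀ z : ℂ, z ≠ 0 →
      ‖f z‖ ≤ C * Real.exp (-t * Real.log (‖z‖)) := by
  have hq0 : q ≠ 0 := by
    intro h; rw [h] at hq1; simp at hq1; linarith
  set L : ℝ := Real.log (‖q‖) with hL_def
  have hL : 0 < L := Real.log_pos hq1
  have hc0 : 0 < ‖c‖ := norm_pos_iff.mpr hc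
  have hlogc : Real.log (‖c‖) = t * L := by
    rw [ht]; field_simp
  set K : Set ℂ := (‖·‖) ⁻¹' Set.Icc 1 (‖q‖) with hK_def
  have hKsub : K ⊆ {z : ℂ | z ≠ 0} := by
    intro z hz h0
    rw [h0] at hz
    norm_num [hK_def] at hz
  have hKc : IsCompact K := by
    apply Metric.isCompact_of_isClosed_isBounded
    · exact isClosed_Icc.preimage continuous_norm
    · apply (Metric.isBounded_closedBall (x := (0:ℂ)) (r := ‖q‖)).subset
      intro z hz
      simp only [hK_def, Set.mem_preimage, Set.mem_Icc] at hz
      simp [Metric.mem_closedBall, Complex.dist_eq, hz.2]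
  obtain ⟨M, hM⟩ := hKc.exists_bound_of_continuousOn (hf.continuousOn.mono hKsub)
  refine ⟨max M 0 * Real.exp (|t| * L), by positivity, fun z hz => ?_⟩
  have hz0 : 0 < ‖z‖ := norm_pos_iff.mpr hz
  set m : ℤ := ⌊Real.log (‖z‖) / L⌋ with hm_def
  have h1 : (m : ℝ) * L ≤ Real.log (‖z‖) :=
    (le_div_iff₀ hL).mp (Int.floor_le _)
  have h2 : Real.log (‖z‖) < ((m : ℝ) + 1) * L := by
    have := Int.lt_floor_add_one (Real.log (‖z‖) / L)
    have := (div_lt_iff₀ hL).mp this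
    push_cast at this ⊢; linarith
  set w : ℂ := q ^ (-m) * z with hw_def
  have hw0 : w ≠ 0 := mul_ne_zero (zpow_ne_zero _ hq0) hz
  have hww : 0 < ‖w‖ := norm_pos_iff.mpr hw0
  have hlogw : Real.log (‖w‖) = -(m : ℝ) * L + Real.log (‖z‖) := by
    rw [hw_def, norm_mul, norm_zpow, Real.log_mul (by positivity) (by positivity),
      Real.log_zpow]
    push_cast; ring
  have hw1 : 1 ≤ ‖w‖ := by
    rw [← Real.exp_log hww]
    apply Real.one_le_exp
    rw [hlogw]; linarith
  have hw2 : ‖w‖ ≤ ‖q‖ := by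
    rw [← Real.exp_log hww, ← Real.exp_log (by linarith : (0:ℝ) < ‖q‖)]
    apply Real.exp_le_exp.mpr
    rw [hlogw]; linarith
  have hwK : w ∈ K := by simp [hK_def, hw1, hw2]
  have hfw : ‖f w‖ ≤ max M 0 := by
    have := hM w hwK
    exact le_max_of_le_left this
  have hrel : f w = c ^ m * f z := iterate_rel q c hq0 hc f heq m z hz
  have hfz : f z = c ^ (-m) * f w := by
    rw [hrel, ← mul_assoc, ← zpow_add₀ hc]; norm_num
  have habs : ‖f z‖ = ‖c‖ ^ (-m) * ‖f w‖ := by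
    rw [hfz, norm_mul, norm_zpow]
  have hcm : ‖c‖ ^ (-m) ≤ Real.exp (|t| * L) * Real.exp (-t * Real.log (‖z‖)) := by
    have e1 : ‖c‖ ^ (-m) = Real.exp (-(m : ℝ) * (t * L)) := by
      rw [← Real.exp_log (zpow_pos hc0 _), Real.log_zpow, hlogc]
      push_cast; ring_nf
    rw [e1, ← Real.exp_add]
    apply Real.exp_le_exp.mpr
    have key : t * (Real.log (‖z‖) - (m : ℝ) * L) ≤ |t| * L := by
      calc t * (Real.log (‖z‖) - (m : ℝ) * L)
          ≤ |t| * (Real.log (‖z‖) - (m : ℝ) * L) :=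
            mul_le_mul_of_nonneg_right (le_abs_self t) (by linarith)
        _ ≤ |t| * L := mul_le_mul_of_nonneg_left (by linarith) (abs_nonneg t)
    nlinarith [key]
  calc ‖f z‖ = ‖c‖ ^ (-m) * ‖f w‖ := habs
    _ ≤ ‖c‖ ^ (-m) * max M 0 :=
        mul_le_mul_of_nonneg_left hfw (le_of_lt (zpow_pos hc0 _))
    _ ≤ (Real.exp (|t| * L) * Real.exp (-t * Real.log (‖z‖))) * max M 0 :=
        mul_le_mul_of_nonneg_right hcm (le_max_right M 0)
    _ = max M 0 * Real.exp (|t| * L) * Real.exp (-t * Real.log (‖z‖)) := by ring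

lemma exists_zpow_core (q c : ℂ) (hq1 : 1 < ‖q‖) (hc : c ≠ 0)
    (f : ℂ → ℂ) (hf : DifferentiableOn ℂ f {z : ℂ | z ≠ 0})
    (heq : ∀ z : ℂ, z ≠ 0 → f (q⁻¹ * z) = c * f z) :
    ∃ k : ℤ, (∀ z : ℂ, z ≠ 0 → f z = f 1 * z ^ k) ∧ (f 1 = 0 ∨ c = q ^ (-k)) := by
  have hq0 : q ≠ 0 := by
    intro h; rw [h] at hq1; simp at hq1; linarith
  set t : ℝ := Real.log (‖c‖) / Real.log (‖q‖) with ht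
  obtain ⟨C, hC0, hC⟩ := growth_bound q c hq1 hc t ht f hf heq
  set k : ℤ := ⌊-t⌋ with hk
  set ε : ℝ := -t - k with hε
  have hε0 : 0 ≤ ε := by
    have := Int.floor_le (-t); simp only [hε]; linarith
  have hε1 : ε < 1 := by
    have := Int.lt_floor_add_one (-t); simp only [hε]; linarith
  set F : ℂ → ℂ := fun z => f z * z ^ (-k) with hF
  have hFd : DifferentiableOn ℂ F {z : ℂ | z ≠ 0} := by
    refine hf.mul (fun z hz => ?_)
    exact (differentiableAt_zpow.mpr (Or.inl hz)).differentiableWithinAt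
  have habsz : ∀ z : ℂ, z ≠ 0 → ‖z ^ (-k)‖ =
      Real.exp (-(k:ℝ) * Real.log (‖z‖)) := by
    intro z hz
    have hz0 : 0 < ‖z‖ := norm_pos_iff.mpr hz
    rw [norm_zpow, ← Real.exp_log (zpow_pos hz0 _), Real.log_zpow]
    push_cast; ring_nf
  have hFb : ∀ z : ℂ, z ≠ 0 →
      ‖F z‖ ≤ C * Real.exp (ε * Real.log (‖z‖)) := by
    intro z hz
    have : ‖F z‖ = ‖f z‖ * ‖z ^ (-k)‖ := by
      rw [hF]; exact norm_mul _ _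
    rw [this, habsz z hz]
    calc ‖f z‖ * Real.exp (-(k:ℝ) * Real.log (‖z‖))
        ≤ (C * Real.exp (-t * Real.log (‖z‖))) *
            Real.exp (-(k:ℝ) * Real.log (‖z‖)) :=
          mul_le_mul_of_nonneg_right (hC z hz) (Real.exp_pos _).le
      _ = C * Real.exp (ε * Real.log (‖z‖)) := by
          rw [mul_assoc, ← Real.exp_add]; congr 2; rw [hε]; push_cast; ring
  have hfzF : ∀ z : ℂ, z ≠ 0 → f z = F z * z ^ k := by
    intro z hz
    rw [hF, mul_assoc, ← zpow_add₀ hz]; simp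
  rcases eq_or_lt_of_le hε0 with hE | hE
  · -- ε = 0 : F is bounded, hence constant
    have hFb' : ∀ z : ℂ, z ≠ 0 → ‖F z‖ ≤ C := by
      intro z hz
      have := hFb z hz
      rw [← hE] at this; simpa using this
    have hten : Tendsto (fun z => F z * z) (𝓝[≠] (0:ℂ)) (𝓝 0) := by
      rw [tendsto_zero_iff_norm_tendsto_zero]
      apply squeeze_zero' (g := fun z : ℂ => C * ‖z‖)
      · filter_upwards with z; positivity
      · filter_upwards [self_mem_nhdsWithin] with z hz
        rw [norm_mul]
        exact mul_le_mul_of_nonneg_right (hFb' z hz) (norm_nonneg _)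
      · have : Tendsto (fun z : ℂ => ‖z‖) (𝓝[≠] 0) (𝓝 0) := by
          have := (continuous_norm (E := ℂ)).tendsto (0:ℂ)
          simpa using this.mono_left nhdsWithin_le_nhds
        simpa using this.const_mul C
    obtain ⟨G, hGd, hGeq, hGt⟩ := extendPunct F hFd hten
    have hconst := const_of_bound G hGd C (fun z h1 => by
      have hz : z ≠ 0 := by intro h; rw [h] at h1; simp at h1; linarith
      rw [hGeq z hz]; exact hFb' z hz)
    have hF1 : ∀ z : ℂ, z ≠ 0 → F z = f 1 := by
      intro z hz
      have : F z = F 1 := by rw [← hGeq z hz, ← hGeq 1 one_ne_zero, hconst z 1]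
      rw [this, hF]; simp
    refine ⟨k, fun z hz => by rw [hfzF z hz, hF1 z hz], ?_⟩
    by_cases h1 : f 1 = 0
    · exact Or.inl h1
    · right
      have hqi : (q⁻¹ : ℂ) ≠ 0 := inv_ne_zero hq0
      have e1 := heq 1 one_ne_zero
      rw [mul_one] at e1
      have e2 : f q⁻¹ = f 1 * (q⁻¹) ^ k := by rw [hfzF q⁻¹ hqi, hF1 q⁻¹ hqi]
      rw [e2] at e1
      have e3 : (q⁻¹ : ℂ) ^ k = c := by
        have e1' : f 1 * (q⁻¹ : ℂ) ^ k = f 1 * c := by rw [e1]; ring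
        exact mul_left_cancel₀ h1 e1'
      rw [← e3, _root_.inv_zpow, ← _root_.zpow_neg]
  · -- 0 < ε : f vanishes identically
    have hzero : ∀ z : ℂ, z ≠ 0 → f z = 0 := by
      have hlogtend : Tendsto (fun z : ℂ => Real.log (‖z‖)) (𝓝[≠] 0) atBot := by
        apply Real.tendsto_log_nhdsNE_zero.comp
        rw [tendsto_nhdsWithin_iff]
        constructor
        · have := continuous_norm.tendsto (0:ℂ)
          simpa using this.mono_left nhdsWithin_le_nhds
        · filter_upwards [self_mem_nhdsWithin] with z hz
          simpa using hz
      have hFt0 : Tendsto F (𝓝[≠] (0:ℂ)) (𝓝 0) := by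
        rw [tendsto_zero_iff_norm_tendsto_zero]
        apply squeeze_zero' (g := fun z : ℂ => C * Real.exp (ε * Real.log (‖z‖)))
        · filter_upwards with z; positivity
        · filter_upwards [self_mem_nhdsWithin] with z hz
          exact hFb z hz
        · have h1 : Tendsto (fun z : ℂ => ε * Real.log (‖z‖)) (𝓝[≠] 0) atBot :=
            hlogtend.const_mul_atBot hE
          have h2 := Real.tendsto_exp_atBot.comp h1
          simpa using h2.const_mul C
      have hten : Tendsto (fun z => F z * z) (𝓝[≠] (0:ℂ)) (𝓝 0) := by
        have hid : Tendsto (fun z : ℂ => z) (𝓝[≠] 0) (𝓝 0) :=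
          tendsto_nhdsWithin_of_tendsto_nhds tendsto_id
        simpa using hFt0.mul hid
      obtain ⟨G, hGd, hGeq, hGt⟩ := extendPunct F hFd hten
      have hG0 : G 0 = 0 := tendsto_nhds_unique hGt hFt0
      set H : ℂ → ℂ := fun z => G z / z with hH
      have hHd : DifferentiableOn ℂ H {z : ℂ | z ≠ 0} :=
        hGd.differentiableOn.div differentiableOn_id (fun z hz => hz)
      have hGten : Tendsto G (𝓝[≠] (0:ℂ)) (𝓝 0) := by
        have := hGd.continuous.tendsto (0:ℂ)
        rw [hG0] at this
        exact this.mono_left nhdsWithin_le_nhds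
      have htenH : Tendsto (fun z => H z * z) (𝓝[≠] (0:ℂ)) (𝓝 0) := by
        apply hGten.congr'
        filter_upwards [self_mem_nhdsWithin] with z hz
        have hz' : (z:ℂ) ≠ 0 := hz
        simp only [hH]
        rw [div_mul_cancel₀ _ hz']
      obtain ⟨P, hPd, hPeq, hPt⟩ := extendPunct H hHd htenH
      have hPb : ∀ z : ℂ, 1 ≤ ‖z‖ →
          ‖P z‖ ≤ C * Real.exp ((ε - 1) * Real.log (‖z‖)) := by
        intro z h1
        have hz : z ≠ 0 := by intro h; rw [h] at h1; simp at h1; linarith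
        have hz0 : 0 < ‖z‖ := norm_pos_iff.mpr hz
        rw [hPeq z hz, hH, norm_div, hGeq z hz]
        rw [div_le_iff₀ hz0]
        calc ‖F z‖ ≤ C * Real.exp (ε * Real.log (‖z‖)) := hFb z hz
          _ = C * (Real.exp ((ε - 1) * Real.log (‖z‖)) *
                Real.exp (Real.log (‖z‖))) := by
              rw [← Real.exp_add]; ring_nf
          _ = C * Real.exp ((ε - 1) * Real.log (‖z‖)) * ‖z‖ := by
              rw [Real.exp_log hz0]; ring
      have hPb' : ∀ z : ℂ, 1 ≤ ‖z‖ → ‖P z‖ ≤ C := by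
        intro z h1
        refine (hPb z h1).trans ?_
        have hlog0 : 0 ≤ Real.log (‖z‖) := Real.log_nonneg h1
        have : (ε - 1) * Real.log (‖z‖) ≤ 0 :=
          mul_nonpos_of_nonpos_of_nonneg (by linarith) hlog0
        calc C * Real.exp ((ε - 1) * Real.log (‖z‖)) ≤ C * 1 :=
              mul_le_mul_of_nonneg_left (Real.exp_le_one_iff.mpr this) hC0
          _ = C := mul_one C
      have hPc := const_of_bound P hPd C hPb'
      have hP0 : P 0 = 0 := by
        have hbnd : ∀ x : ℝ, 1 ≤ x → ‖P 0‖ ≤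
            C * Real.exp ((ε - 1) * Real.log x) := by
          intro x hx
          have h1 : 1 ≤ ‖(x : ℂ)‖ := by
            rw [Complex.norm_real, Real.norm_eq_abs]; exact hx.trans (le_abs_self x)
          have h2 := hPb (x : ℂ) h1
          rw [hPc 0 (x : ℂ)]
          convert h2 using 3
          rw [Complex.norm_real, Real.norm_eq_abs, _root_.abs_of_nonneg (by linarith : (0:ℝ) ≤ x)]
        have htend : Tendsto (fun x : ℝ => C * Real.exp ((ε - 1) * Real.log x)) atTop (𝓝 0) := by
          have h1 : Tendsto (fun x : ℝ => (ε - 1) * Real.log x) atTop atBot :=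
            Real.tendsto_log_atTop.const_mul_atTop_of_neg (by linarith)
          have h2 := Real.tendsto_exp_atBot.comp h1
          simpa using h2.const_mul C
        have hle : ‖P 0‖ ≤ 0 := by
          apply ge_of_tendsto htend
          filter_upwards [eventually_ge_atTop (1:ℝ)] with x hx
          exact hbnd x hx
        have := norm_nonneg (P 0)
        have habs0 : ‖P 0‖ = 0 := le_antisymm hle this
        exact (norm_eq_zero.mp habs0)
      intro z hz
      have hPz : P z = 0 := by rw [hPc z 0, hP0]
      have hHz : H z = 0 := by rw [← hPeq z hz, hPz]
      have hGz : G z = 0 := by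
        have h7 : G z / z = 0 := hHz
        rcases div_eq_zero_iff.mp h7 with h | h
        · exact h
        · exact absurd h hz
      have hFz : F z = 0 := by rw [← hGeq z hz, hGz]
      rw [hfzF z hz, hFz, zero_mul]
    refine ⟨0, fun z hz => ?_, Or.inl (hzero 1 one_ne_zero)⟩
    rw [hzero z hz, hzero 1 one_ne_zero, zero_mul]

lemma exists_zpow (q : ℂ) (hq0 : q ≠ 0) (hq : ‖q‖ ≠ 1) (c : ℂ) (hc : c ≠ 0)
    (f : ℂ → ℂ) (hf : DifferentiableOn ℂ f {z : ℂ | z ≠ 0})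
    (heq : ∀ z : ℂ, z ≠ 0 → f (q⁻¹ * z) = c * f z) :
    ∃ k : ℤ, (∀ z : ℂ, z ≠ 0 → f z = f 1 * z ^ k) ∧ (f 1 = 0 ∨ c = q ^ (-k)) := by
  rcases lt_or_gt_of_ne hq with hlt | hgt
  · have hq0' : 0 < ‖q‖ := norm_pos_iff.mpr hq0
    have hq1 : 1 < ‖q⁻¹‖ := by
      rw [norm_inv]
      exact (one_lt_inv₀ hq0').mpr hlt
    have heq' : ∀ z : ℂ, z ≠ 0 → f ((q⁻¹)⁻¹ * z) = c⁻¹ * f z := by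
      intro z hz
      rw [inv_inv]
      have h2 := heq (q * z) (mul_ne_zero hq0 hz)
      rw [← mul_assoc, inv_mul_cancel₀ hq0, one_mul] at h2
      rw [h2, ← mul_assoc, inv_mul_cancel₀ hc, one_mul]
    obtain ⟨k, hk1, hk2⟩ := exists_zpow_core q⁻¹ c⁻¹ hq1 (inv_ne_zero hc) f hf heq'
    refine ⟨k, hk1, ?_⟩
    rcases hk2 with h | h
    · exact Or.inl h
    · right
      have h1 : c = ((q⁻¹) ^ (-k))⁻¹ := by rw [← h, inv_inv]
      rw [h1, _root_.inv_zpow, inv_inv]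
  · exact exists_zpow_core q c hgt hc f hf heq

end Analytic

section AuxMatrix
open scoped Classical

open scoped Classical

variable {n : ℕ} (q : ℂ) (a : Fin n → ℂ)

/-- The exponent `m` with `a i = q^m * a j`, if it exists. -/
noncomputable def expo (i j : Fin n) : ℤ :=
  if h : ∃ m : ℤ, a i = q ^ m * a j then h.choose else 0

/-- The loop `z ↦ (xᵢⱼ z^{eᵢⱼ})` associated to a supported matrix `x`. -/
noncomputable def loopOf (x : Matrix (Fin n) (Fin n) ℂ) : ℂ → Matrix (Fin n) (Fin n) ℂ :=
  fun z => Matrix.of fun i j =>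
    if ∃ m : ℤ, a i = q ^ m * a j then x i j * z ^ expo q a i j else 0

variable {q a}

lemma qzpow_inj (hq0 : q ≠ 0) (hq : ‖q‖ ≠ 1) {m m' : ℤ}
    (h : q ^ m = q ^ m') : m = m' := by
  have h1 : ‖q‖ ^ m = ‖q‖ ^ m' := by
    rw [← norm_zpow, ← norm_zpow, h]
  have hq0' : 0 < ‖q‖ := norm_pos_iff.mpr hq0
  have h2 : (m : ℝ) * Real.log (‖q‖) = (m' : ℝ) * Real.log (‖q‖) := by
    rw [← Real.log_zpow, ← Real.log_zpow, h1]
  have h3 : Real.log (‖q‖) ≠ 0 := by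
    intro h4
    rcases Real.log_eq_zero.mp h4 with h5 | h5 | h5
    · exact absurd h5 (ne_of_gt hq0')
    · exact hq h5
    · linarith
  have := mul_right_cancel₀ h3 h2
  exact_mod_cast this

lemma expo_spec {i j : Fin n} (h : ∃ m : ℤ, a i = q ^ m * a j) :
    a i = q ^ expo q a i j * a j := by
  rw [expo, dif_pos h]; exact h.choose_spec

lemma expo_unique (hq0 : q ≠ 0) (hq : ‖q‖ ≠ 1) (ha : ∀ i, a i ≠ 0)
    {i j : Fin n} {m : ℤ} (h : a i = q ^ m * a j) : expo q a i j = m := by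
  have hs := expo_spec (a := a) ⟨m, h⟩
  rw [h] at hs
  exact qzpow_inj hq0 hq (mul_right_cancel₀ (ha j) hs.symm)

lemma rel_refl (i : Fin n) : ∃ m : ℤ, a i = q ^ m * a i := ⟨0, by simp⟩

lemma rel_symm (hq0 : q ≠ 0) {i j : Fin n} (h : ∃ m : ℤ, a i = q ^ m * a j) :
    ∃ m : ℤ, a j = q ^ m * a i := by
  obtain ⟨m, hm⟩ := h
  refine ⟨-m, ?_⟩
  rw [hm, ← mul_assoc, ← zpow_add₀ hq0]; simp

lemma rel_trans (hq0 : q ≠ 0) {i j l : Fin n} (h1 : ∃ m : ℤ, a i = q ^ m * a j)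
    (h2 : ∃ m : ℤ, a j = q ^ m * a l) : ∃ m : ℤ, a i = q ^ m * a l := by
  obtain ⟨m, hm⟩ := h1; obtain ⟨m', hm'⟩ := h2
  exact ⟨m + m', by rw [hm, hm', ← mul_assoc, ← zpow_add₀ hq0]⟩

/-- `Supported` matrices: vanishing entries outside the blocks. -/
def Supported (q : ℂ) (a : Fin n → ℂ) (x : Matrix (Fin n) (Fin n) ℂ) : Prop :=
  ∀ i j, (∀ m : ℤ, a i ≠ q ^ m * a j) → x i j = 0

lemma supported_apply_eq_zero {x : Matrix (Fin n) (Fin n) ℂ} (hx : Supported q a x)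
    {i j : Fin n} (h : ¬ ∃ m : ℤ, a i = q ^ m * a j) : x i j = 0 :=
  hx i j (fun m => (not_exists.mp h m))

lemma supported_one : Supported q a (1 : Matrix (Fin n) (Fin n) ℂ) := by
  intro i j h
  by_cases hij : i = j
  · subst hij; exact absurd (by simp) (h 0)
  · exact Matrix.one_apply_ne hij

lemma supported_mul (hq0 : q ≠ 0) {x y : Matrix (Fin n) (Fin n) ℂ}
    (hx : Supported q a x) (hy : Supported q a y) : Supported q a (x * y) := by
  intro i j h
  rw [Matrix.mul_apply]
  apply Finset.sum_eq_zero
  intro k _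
  by_cases hik : ∃ m : ℤ, a i = q ^ m * a k
  · have hkj : ¬ ∃ m : ℤ, a k = q ^ m * a j := by
      intro hkj
      obtain ⟨m, hm⟩ := rel_trans hq0 hik hkj
      exact h m hm
    rw [supported_apply_eq_zero hy hkj, mul_zero]
  · rw [supported_apply_eq_zero hx hik, zero_mul]

lemma supported_inv (hq0 : q ≠ 0) {x : Matrix (Fin n) (Fin n) ℂ}
    (hu : IsUnit x) (hx : Supported q a x) : Supported q a x⁻¹ := by
  have hdet : IsUnit x.det := (Matrix.isUnit_iff_isUnit_det x).mp hu
  set y : Matrix (Fin n) (Fin n) ℂ := Matrix.of fun i j =>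
    if ∃ m : ℤ, a i = q ^ m * a j then x⁻¹ i j else 0 with hy
  have hxy : x * y = 1 := by
    have hinv : x * x⁻¹ = 1 := Matrix.mul_nonsing_inv x hdet
    ext i j
    rw [Matrix.mul_apply]
    by_cases hij : ∃ m : ℤ, a i = q ^ m * a j
    · have : ∀ k ∈ Finset.univ, x i k * y k j = x i k * x⁻¹ k j := by
        intro k _
        by_cases hkj : ∃ m : ℤ, a k = q ^ m * a j
        · simp only [hy, Matrix.of_apply, if_pos hkj]
        · have hik : ¬ ∃ m : ℤ, a i = q ^ m * a k := by
            intro hik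
            exact hkj (rel_trans hq0 (rel_symm hq0 hik) hij)
          simp only [hy, Matrix.of_apply, if_neg hkj,
            supported_apply_eq_zero hx hik, zero_mul, mul_zero]
      rw [Finset.sum_congr rfl this, ← Matrix.mul_apply, hinv]
    · have hij' : i ≠ j := by rintro rfl; exact hij (rel_refl i)
      rw [Matrix.one_apply_ne hij']
      apply Finset.sum_eq_zero
      intro k _
      by_cases hkj : ∃ m : ℤ, a k = q ^ m * a j
      · have hik : ¬ ∃ m : ℤ, a i = q ^ m * a k := by
          intro hik
          exact hij (rel_trans hq0 hik hkj)
        rw [supported_apply_eq_zero hx hik, zero_mul]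
      · simp only [hy, Matrix.of_apply, if_neg hkj, mul_zero]
  have hxi : x⁻¹ = y := Matrix.inv_eq_right_inv hxy
  intro i j h
  rw [hxi, hy]
  simp only [Matrix.of_apply]
  rw [if_neg (by intro hc; obtain ⟨m, hm⟩ := hc; exact h m hm)]

lemma loopOf_mul (hq0 : q ≠ 0) (hq : ‖q‖ ≠ 1) (ha : ∀ i, a i ≠ 0)
    {x y : Matrix (Fin n) (Fin n) ℂ} (hx : Supported q a x) (hy : Supported q a y)
    {z : ℂ} (hz : z ≠ 0) :
    loopOf q a x z * loopOf q a y z = loopOf q a (x * y) z := by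
  ext i j
  rw [Matrix.mul_apply]
  simp only [loopOf, Matrix.of_apply]
  by_cases hij : ∃ m : ℤ, a i = q ^ m * a j
  · rw [if_pos hij, Matrix.mul_apply, Finset.sum_mul]
    apply Finset.sum_congr rfl
    intro k _
    by_cases hik : ∃ m : ℤ, a i = q ^ m * a k
    · by_cases hkj : ∃ m : ℤ, a k = q ^ m * a j
      · rw [if_pos hik, if_pos hkj]
        have hsum : expo q a i k + expo q a k j = expo q a i j := by
          have h1 := expo_spec (a := a) hik
          have h2 := expo_spec (a := a) hkj
          have h3 : a i = q ^ (expo q a i k + expo q a k j) * a j := by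
            rw [zpow_add₀ hq0, mul_assoc, ← h2, ← h1]
          rw [expo_unique hq0 hq ha h3]
        rw [← hsum, zpow_add₀ hz]; ring
      · simp [if_neg hkj, supported_apply_eq_zero hy hkj]
    · simp [if_neg hik, supported_apply_eq_zero hx hik]
  · rw [if_neg hij]
    apply Finset.sum_eq_zero
    intro k _
    by_cases hik : ∃ m : ℤ, a i = q ^ m * a k
    · have hkj : ¬ ∃ m : ℤ, a k = q ^ m * a j := by
        intro hkj; exact hij (rel_trans hq0 hik hkj)
      rw [if_neg hkj, mul_zero]
    · rw [if_neg hik, zero_mul]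

lemma loopOf_one (hq0 : q ≠ 0) (hq : ‖q‖ ≠ 1) (ha : ∀ i, a i ≠ 0) (z : ℂ) :
    loopOf q a (1 : Matrix (Fin n) (Fin n) ℂ) z = 1 := by
  ext i j
  simp only [loopOf, Matrix.of_apply]
  by_cases hij : i = j
  · subst hij
    rw [if_pos (rel_refl i), expo_unique hq0 hq ha (show a i = q ^ (0:ℤ) * a i by simp)]
    simp
  · rw [Matrix.one_apply_ne hij]
    by_cases h : ∃ m : ℤ, a i = q ^ m * a j
    · rw [if_pos h, zero_mul]
    · rw [if_neg h]

lemma loopOf_eval_one {x : Matrix (Fin n) (Fin n) ℂ} (hx : Supported q a x) :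
    loopOf q a x 1 = x := by
  ext i j
  simp only [loopOf, Matrix.of_apply]
  by_cases hij : ∃ m : ℤ, a i = q ^ m * a j
  · rw [if_pos hij, _root_.one_zpow, mul_one]
  · rw [if_neg hij, supported_apply_eq_zero hx hij]

end AuxMatrix


section InZLemmas
open scoped Classical

variable {n : ℕ} {q : ℂ} {a : Fin n → ℂ}

lemma loopOf_inZ (hq0 : q ≠ 0) (hq : ‖q‖ ≠ 1) (ha : ∀ i, a i ≠ 0)
    {x : Matrix (Fin n) (Fin n) ℂ} (hu : IsUnit x) (hx : Supported q a x) :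
    InZ n q a (loopOf q a x) := by
  refine ⟨⟨?_, ?_⟩, ?_⟩
  · intro i j
    simp only [loopOf, Matrix.of_apply]
    by_cases hij : ∃ m : ℤ, a i = q ^ m * a j
    · simp only [if_pos hij]
      intro z hz
      exact ((differentiableAt_zpow.mpr (Or.inl hz)).const_mul _).differentiableWithinAt
    · simp only [if_neg hij]
      exact differentiableOn_const 0
  · intro z hz
    have hinv : Supported q a x⁻¹ := supported_inv hq0 hu hx
    have h1 : loopOf q a x z * loopOf q a x⁻¹ z = 1 := by
      rw [loopOf_mul hq0 hq ha hx hinv hz,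
        Matrix.mul_nonsing_inv x ((Matrix.isUnit_iff_isUnit_det x).mp hu),
        loopOf_one hq0 hq ha]
    have h2 : (loopOf q a x z).det * (loopOf q a x⁻¹ z).det = 1 := by
      rw [← Matrix.det_mul, h1, Matrix.det_one]
    exact (Matrix.isUnit_iff_isUnit_det _).mpr (IsUnit.of_mul_eq_one _ h2)
  · intro z hz
    ext i j
    rw [Matrix.mul_diagonal, Matrix.diagonal_mul]
    simp only [loopOf, Matrix.of_apply]
    by_cases hij : ∃ m : ℤ, a i = q ^ m * a j
    · rw [if_pos hij, if_pos hij]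
      have he := expo_spec (a := a) hij
      set e := expo q a i j with he_def
      have hcan : (q:ℂ) ^ e * (q⁻¹) ^ e = 1 := by
        rw [_root_.inv_zpow, mul_inv_cancel₀ (zpow_ne_zero _ hq0)]
      calc x i j * z ^ e * a j
          = a j * (x i j * z ^ e) * (q ^ e * (q⁻¹) ^ e) := by rw [hcan]; ring
        _ = (q ^ e * a j) * (x i j * ((q⁻¹) ^ e * z ^ e)) := by ring
        _ = a i * (x i j * (q⁻¹ * z) ^ e) := by rw [← he, mul_zpow]
    · rw [if_neg hij, if_neg hij, zero_mul, mul_zero]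

lemma inZ_entry (hq0 : q ≠ 0) (hq : ‖q‖ ≠ 1) (ha : ∀ i, a i ≠ 0)
    {g : ℂ → Matrix (Fin n) (Fin n) ℂ} (hg : InZ n q a g) (i j : Fin n) :
    (∀ z : ℂ, z ≠ 0 → g z i j = loopOf q a (g 1) z i j) ∧
      ((∀ m : ℤ, a i ≠ q ^ m * a j) → g 1 i j = 0) := by
  set c : ℂ := a j * (a i)⁻¹ with hc_def
  have hc : c ≠ 0 := mul_ne_zero (ha j) (inv_ne_zero (ha i))
  have heqf : ∀ z : ℂ, z ≠ 0 → g (q⁻¹ * z) i j = c * g z i j := by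
    intro z hz
    have h := hg.2 z hz
    have h2 : (g z * Matrix.diagonal a) i j = (Matrix.diagonal a * g (q⁻¹ * z)) i j := by
      rw [h]
    rw [Matrix.mul_diagonal, Matrix.diagonal_mul] at h2
    have h4 : (a i)⁻¹ * (g z i j * a j) = (a i)⁻¹ * (a i * g (q⁻¹ * z) i j) := by rw [h2]
    rw [← mul_assoc ((a i)⁻¹) (a i), inv_mul_cancel₀ (ha i), one_mul] at h4
    rw [← h4, hc_def]; ring
  obtain ⟨k, hk, hor⟩ := exists_zpow q hq0 hq c hc (fun z => g z i j) (hg.1.1 i j) heqf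
  rcases hor with h0 | hck
  · constructor
    · intro z hz
      rw [hk z hz]
      simp only [loopOf, Matrix.of_apply]
      by_cases hij : ∃ m : ℤ, a i = q ^ m * a j
      · rw [if_pos hij, h0, zero_mul, zero_mul]
      · rw [if_neg hij, h0, zero_mul]
    · intro _; exact h0
  · have h5 : a j = q ^ (-k) * a i := by
      rw [← hck, hc_def, mul_assoc, inv_mul_cancel₀ (ha i), mul_one]
    have hrel : a i = q ^ k * a j := by
      rw [h5, ← mul_assoc, ← zpow_add₀ hq0]; simp
    have hexists : ∃ m : ℤ, a i = q ^ m * a j := ⟨k, hrel⟩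
    have he : expo q a i j = k := expo_unique hq0 hq ha hrel
    constructor
    · intro z hz
      rw [hk z hz]
      simp only [loopOf, Matrix.of_apply]
      rw [if_pos hexists, he]
    · intro hall; exact absurd hrel (hall k)

lemma inZ_eq_loopOf (hq0 : q ≠ 0) (hq : ‖q‖ ≠ 1) (ha : ∀ i, a i ≠ 0)
    {g : ℂ → Matrix (Fin n) (Fin n) ℂ} (hg : InZ n q a g) :
    ∀ z : ℂ, z ≠ 0 → g z = loopOf q a (g 1) z := by
  intro z hz
  ext i j
  exact (inZ_entry hq0 hq ha hg i j).1 z hz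

lemma inZ_supported (hq0 : q ≠ 0) (hq : ‖q‖ ≠ 1) (ha : ∀ i, a i ≠ 0)
    {g : ℂ → Matrix (Fin n) (Fin n) ℂ} (hg : InZ n q a g) : Supported q a (g 1) :=
  fun i j hij => (inZ_entry hq0 hq ha hg i j).2 hij

lemma inZ_congr (hq0 : q ≠ 0) (hq : ‖q‖ ≠ 1) (ha : ∀ i, a i ≠ 0)
    {x : Matrix (Fin n) (Fin n) ℂ} (hu : IsUnit x) (hx : Supported q a x)
    (g : ℂ → Matrix (Fin n) (Fin n) ℂ) (hgx : ∀ z : ℂ, z ≠ 0 → g z = loopOf q a x z) :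
    InZ n q a g := by
  have hL := loopOf_inZ hq0 hq ha hu hx
  refine ⟨⟨?_, ?_⟩, ?_⟩
  · intro i j
    exact (hL.1.1 i j).congr fun z hz => by rw [hgx z hz]
  · intro z hz
    rw [hgx z hz]; exact hL.1.2 z hz
  · intro z hz
    rw [hgx z hz, hgx (q⁻¹ * z) (mul_ne_zero (inv_ne_zero hq0) hz)]
    exact hL.2 z hz

end InZLemmas

/-- Let `q ∈ ℂ*` with `|q| ≠ 1` and `a = diag(a₁,…,aₙ)` with `aᵢ ∈ ℂ*`, and let `Z` be the
centralizer of `(a,q)` in `LGL(n)`.  Then `Z` is a subgroup of `LGL(n)` (contains the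
identity, is closed under pointwise product and inverse), the evaluation `ev₁ : g ↦ g(1)`
is an injective group homomorphism on `Z` (injective up to equality of loops on `ℂ*`),
its image is exactly `{x ∈ GL(n,ℂ) : xᵢⱼ = 0 whenever aᵢ/aⱼ ∉ qℤ}`, and in particular the
image contains every invertible diagonal matrix. -/
theorem centralizer_subgroup_ev (n : ℕ) (hn : 0 < n) (q : ℂ) (hq0 : q ≠ 0)
    (hq : ‖q‖ ≠ 1) (a : Fin n → ℂ) (ha : ∀ i, a i ≠ 0) :
    InZ n q a (fun _ => (1 : Matrix (Fin n) (Fin n) ℂ)) ∧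
    (∀ g h, InZ n q a g → InZ n q a h → InZ n q a (fun z => g z * h z)) ∧
    (∀ g, InZ n q a g → InZ n q a (fun z => (g z)⁻¹)) ∧
    (∀ g h, InZ n q a g → InZ n q a h →
      (fun z => g z * h z) 1 = g 1 * h 1) ∧
    (∀ g h, InZ n q a g → InZ n q a h → g 1 = h 1 → ∀ z : ℂ, z ≠ 0 → g z = h z) ∧
    (∀ x : Matrix (Fin n) (Fin n) ℂ,
      (IsUnit x ∧ ∀ i j, (∀ m : ℤ, a i ≠ q ^ m * a j) → x i j = 0) ↔
      ∃ g, InZ n q a g ∧ g 1 = x) ∧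
    (∀ t : Fin n → ℂ, (∀ i, t i ≠ 0) →
      ∃ g, InZ n q a g ∧ g 1 = Matrix.diagonal t) := by
  have hone : InZ n q a (fun _ => (1 : Matrix (Fin n) (Fin n) ℂ)) :=
    inZ_congr hq0 hq ha isUnit_one supported_one _
      (fun z hz => (loopOf_one hq0 hq ha z).symm)
  have hmul : ∀ g h, InZ n q a g → InZ n q a h → InZ n q a (fun z => g z * h z) := by
    intro g h hg hh
    have hug : IsUnit (g 1) := hg.1.2 1 one_ne_zero
    have huh : IsUnit (h 1) := hh.1.2 1 one_ne_zero
    refine inZ_congr hq0 hq ha (hug.mul huh)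
      (supported_mul hq0 (inZ_supported hq0 hq ha hg) (inZ_supported hq0 hq ha hh)) _ ?_
    intro z hz
    rw [inZ_eq_loopOf hq0 hq ha hg z hz, inZ_eq_loopOf hq0 hq ha hh z hz,
      loopOf_mul hq0 hq ha (inZ_supported hq0 hq ha hg) (inZ_supported hq0 hq ha hh) hz]
  have hinv : ∀ g, InZ n q a g → InZ n q a (fun z => (g z)⁻¹) := by
    intro g hg
    have hug : IsUnit (g 1) := hg.1.2 1 one_ne_zero
    have hsg : Supported q a (g 1) := inZ_supported hq0 hq ha hg
    have hsi : Supported q a (g 1)⁻¹ := supported_inv hq0 hug hsg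
    have hui : IsUnit (g 1)⁻¹ := by
      have h2 : (g 1)⁻¹ * (g 1) = 1 :=
        Matrix.nonsing_inv_mul (g 1) ((Matrix.isUnit_iff_isUnit_det _).mp hug)
      have h3 : ((g 1)⁻¹).det * (g 1).det = 1 := by rw [← Matrix.det_mul, h2, Matrix.det_one]
      exact (Matrix.isUnit_iff_isUnit_det _).mpr (IsUnit.of_mul_eq_one _ h3)
    refine inZ_congr hq0 hq ha hui hsi _ ?_
    intro z hz
    apply Matrix.inv_eq_right_inv
    rw [inZ_eq_loopOf hq0 hq ha hg z hz, loopOf_mul hq0 hq ha hsg hsi hz,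
      Matrix.mul_nonsing_inv (g 1) ((Matrix.isUnit_iff_isUnit_det _).mp hug),
      loopOf_one hq0 hq ha]
  refine ⟨hone, hmul, hinv, fun g h _ _ => rfl, ?_, ?_, ?_⟩
  · intro g h hg hh he z hz
    rw [inZ_eq_loopOf hq0 hq ha hg z hz, inZ_eq_loopOf hq0 hq ha hh z hz, he]
  · intro x
    constructor
    · rintro ⟨hu, hs⟩
      exact ⟨loopOf q a x, loopOf_inZ hq0 hq ha hu hs, loopOf_eval_one hs⟩
    · rintro ⟨g, hg, rfl⟩
      exact ⟨hg.1.2 1 one_ne_zero, inZ_supported hq0 hq ha hg⟩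
  · intro t ht
    have hu : IsUnit (Matrix.diagonal t) := by
      rw [Matrix.isUnit_iff_isUnit_det, Matrix.det_diagonal]
      rw [isUnit_iff_ne_zero]
      exact Finset.prod_ne_zero_iff.mpr (fun i _ => ht i)
    have hs : Supported q a (Matrix.diagonal t) := by
      intro i j hij
      by_cases h : i = j
      · subst h; exact absurd (by simp) (hij 0)
      · exact Matrix.diagonal_apply_ne t h
    exact ⟨loopOf q a (Matrix.diagonal t), loopOf_inZ hq0 hq ha hu hs, loopOf_eval_one hs⟩
end
end

section
/- Let n ≥ 1 and let q > 1 be real. Let d₁ ≥ … ≥ dₙ > 0 and d'₁ ≥ … ≥ d'ₙ > 0 be real numbers with d₁·⋯·dₙ = 1, d'₁·⋯·d'ₙ = 1, d₁ ≤ q·dₙ and d'₁ ≤ q·d'ₙ. Suppose there exists a holomorphic map u : ℂ* → GL(n,ℂ) such that u(z)·diag(d₁,…,dₙ) = diag(d'₁,…,d'ₙ)·u(q⁻¹·z) for all z ∈ ℂ*. Then dᵢ = d'ᵢ for all i. (Two elements of the dominant set Â⁺ that are conjugate in the holomorphic loop group are equal.) -/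
open Matrix Complex
open Filter Asymptotics Set Topology

noncomputable section

/-- Key analytic lemma: if `f` is holomorphic on `ℂ*`, satisfies `f(q⁻¹z) = λ·f(z)` with
`λ > 0`, `q > 1`, and `f 1 ≠ 0`, then `λ` is an integer power of `q`. -/
lemma key_analytic {q lam : ℝ} (hq : 1 < q) (hlam : 0 < lam)
    {f : ℂ → ℂ} (hf : DifferentiableOn ℂ f {z : ℂ | z ≠ 0})
    (hfe : ∀ z : ℂ, z ≠ 0 → f ((q : ℂ)⁻¹ * z) = (lam : ℂ) * f z)
    (hne : f 1 ≠ 0) : ∃ k : ℤ, lam = q ^ k := by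
  by_contra hcon
  push_neg at hcon
  have hq0 : (0:ℝ) < q := lt_trans one_pos hq
  have hqne1 : q ≠ 1 := ne_of_gt hq
  have hqc : (q : ℂ) ≠ 0 := by exact_mod_cast ne_of_gt hq0
  set t := Real.logb q lam with ht
  have hlamt : q ^ t = lam := Real.rpow_logb hq0 hqne1 hlam
  set p : ℤ := ⌊t⌋ with hp
  set s : ℝ := t - p with hs
  have hs0 : 0 < s := by
    rcases lt_or_eq_of_le (sub_nonneg.2 (Int.floor_le t)) with h | h
    · exact h
    · exfalso
      apply hcon p
      have : t = (p : ℝ) := by linarith [h.symm]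
      rw [← hlamt, this, Real.rpow_intCast]
  have hs1 : s < 1 := by
    have := Int.lt_floor_add_one t
    simp only [hs]
    linarith
  set μ : ℝ := q ^ s with hμ
  have hμ1 : 1 < μ := (Real.one_lt_rpow_iff_of_pos hq0).2 (Or.inl ⟨hq, hs0⟩)
  have hμ0 : 0 < μ := lt_trans one_pos hμ1
  set g : ℂ → ℂ := fun z => f z * z ^ p with hg
  have hgd : DifferentiableOn ℂ g {z : ℂ | z ≠ 0} := by
    apply hf.mul
    intro z hz
    exact (differentiableAt_zpow.2 (Or.inl hz)).differentiableWithinAt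
  have hμeqR : lam * ((q : ℝ)⁻¹) ^ p = μ := by
    have h1 : ((q : ℝ)⁻¹) ^ p = q ^ ((-p : ℤ) : ℝ) := by
      rw [Real.rpow_intCast, _root_.zpow_neg, _root_.inv_zpow]
    rw [← hlamt, h1, ← Real.rpow_add hq0]
    congr 1
    push_cast
    ring
  have hgfe : ∀ z : ℂ, z ≠ 0 → g ((q : ℂ)⁻¹ * z) = (μ : ℂ) * g z := by
    intro z hz
    have h2 : ((q : ℂ)⁻¹ * z) ^ p = ((q : ℂ)⁻¹) ^ p * z ^ p := mul_zpow _ _ _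
    have h3 : ((μ : ℝ) : ℂ) = (lam : ℂ) * ((q : ℂ)⁻¹) ^ p := by
      rw [← hμeqR]
      push_cast [Complex.ofReal_zpow]
      ring
    simp only [hg]
    rw [hfe z hz, h2, h3]
    ring
  have hiter : ∀ (m : ℕ) (z : ℂ), z ≠ 0 →
      g (((q : ℂ)⁻¹) ^ m * z) = ((μ ^ m : ℝ) : ℂ) * g z := by
    intro m
    induction m with
    | zero => intro z hz; simp
    | succ m ih =>
      intro z hz
      have h1 : ((q : ℂ)⁻¹) ^ (m + 1) * z = (q : ℂ)⁻¹ * (((q : ℂ)⁻¹) ^ m * z) := by ring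
      have h2 : ((q : ℂ)⁻¹) ^ m * z ≠ 0 :=
        mul_ne_zero (pow_ne_zero _ (inv_ne_zero hqc)) hz
      rw [h1, hgfe _ h2, ih z hz]
      push_cast
      ring
  -- maximum of ‖g‖ on the compact annulus q⁻¹ ≤ ‖w‖ ≤ 1
  set A : Set ℂ := {w : ℂ | ‖w‖ ∈ Set.Icc q⁻¹ 1} with hA
  have hAclosed : IsClosed A := IsClosed.preimage continuous_norm isClosed_Icc
  have hAbdd : Bornology.IsBounded A := by
    apply (Metric.isBounded_closedBall (x := (0:ℂ)) (r := 1)).subset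
    intro w hw
    simpa [Metric.mem_closedBall, Complex.dist_eq] using hw.2
  have hAcpt : IsCompact A := Metric.isCompact_of_isClosed_isBounded hAclosed hAbdd
  have hqinv1 : q⁻¹ ≤ 1 := by
    rw [inv_le_one₀ hq0]; exact hq.le
  have hAne : A.Nonempty := ⟨1, by simp [hA, hqinv1]⟩
  have hAsub : A ⊆ {z : ℂ | z ≠ 0} := by
    intro w hw
    have : (0:ℝ) < ‖w‖ := lt_of_lt_of_le (inv_pos.2 hq0) hw.1
    exact norm_pos_iff.1 this
  obtain ⟨x, hxA, hxmax⟩ := hAcpt.exists_isMaxOn hAne ((hgd.continuousOn.mono hAsub).norm)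
  set C : ℝ := ‖g x‖ with hC
  have hC0 : 0 ≤ C := norm_nonneg _
  -- bound: ‖g z‖ ≤ C * ‖z‖ ^ (-s) for 0 < ‖z‖ ≤ 1
  have hbound : ∀ z : ℂ, z ≠ 0 → ‖z‖ ≤ 1 → ‖g z‖ ≤ C * ‖z‖ ^ (-s : ℝ) := by
    intro z hz hz1
    have hz0 : (0:ℝ) < ‖z‖ := norm_pos_iff.2 hz
    set L : ℝ := -Real.logb q ‖z‖ with hL
    have hL0 : 0 ≤ L := neg_nonneg.2 (Real.logb_nonpos hq hz0.le hz1)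
    set m : ℕ := ⌊L⌋₊ with hm
    have hmL : (m : ℝ) ≤ L := Nat.floor_le hL0
    have hLm : L < m + 1 := Nat.lt_floor_add_one L
    have hznorm : ‖z‖ = q ^ (-L : ℝ) := by
      rw [hL, neg_neg]
      exact (Real.rpow_logb hq0 hqne1 hz0).symm
    set w : ℂ := (q : ℂ) ^ m * z with hw
    have hw0 : w ≠ 0 := mul_ne_zero (pow_ne_zero _ hqc) hz
    have hwz : z = ((q : ℂ)⁻¹) ^ m * w := by
      rw [hw]
      field_simp
      rw [one_div, inv_pow, inv_mul_cancel₀ (pow_ne_zero _ hqc)]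
    have hwnorm : ‖w‖ = q ^ ((m : ℝ) - L) := by
      rw [hw, norm_mul, norm_pow, Complex.norm_real, Real.norm_eq_abs,
        abs_of_pos hq0, hznorm, ← Real.rpow_natCast q m, ← Real.rpow_add hq0]
      ring_nf
    have hwA : w ∈ A := by
      constructor
      · rw [hwnorm, ← Real.rpow_neg_one q]
        exact Real.rpow_le_rpow_of_exponent_le hq.le (by linarith)
      · rw [hwnorm, ← Real.rpow_zero q]
        exact Real.rpow_le_rpow_of_exponent_le hq.le (by linarith)
    have hgz : ‖g z‖ = μ ^ m * ‖g w‖ := by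
      conv_lhs => rw [hwz]
      rw [hiter m w hw0, norm_mul, Complex.norm_real, Real.norm_eq_abs,
        abs_of_pos (pow_pos hμ0 m)]
    have hμm : μ ^ m ≤ ‖z‖ ^ (-s : ℝ) := by
      have h1 : μ ^ m = q ^ (s * m) := by
        rw [Real.rpow_mul hq0.le, Real.rpow_natCast]
      have h2 : ‖z‖ ^ (-s : ℝ) = q ^ (s * L) := by
        rw [hznorm, ← Real.rpow_mul hq0.le]
        ring_nf
      rw [h1, h2]
      exact Real.rpow_le_rpow_of_exponent_le hq.le
        (mul_le_mul_of_nonneg_left hmL hs0.le)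
    calc ‖g z‖ = μ ^ m * ‖g w‖ := hgz
      _ ≤ μ ^ m * C := mul_le_mul_of_nonneg_left (hxmax hwA) (pow_nonneg hμ0.le m)
      _ ≤ ‖z‖ ^ (-s : ℝ) * C := mul_le_mul_of_nonneg_right hμm hC0
      _ = C * ‖z‖ ^ (-s : ℝ) := mul_comm _ _
  -- removable singularity: g has a limit at 0
  have hmem1 : ∀ᶠ z in 𝓝[≠] (0:ℂ), ‖z‖ ≤ 1 := by
    apply eventually_nhdsWithin_of_eventually_nhds
    filter_upwards [Metric.closedBall_mem_nhds (0:ℂ) one_pos] with z hz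
    simpa [Metric.mem_closedBall, Complex.dist_eq] using hz
  have hmemne : ∀ᶠ z in 𝓝[≠] (0:ℂ), z ≠ 0 := by
    filter_upwards [self_mem_nhdsWithin] with z hz
    simpa using hz
  have htend0 : Tendsto (fun z : ℂ => C * ‖z‖ ^ (1 - s : ℝ)) (𝓝[≠] (0:ℂ)) (𝓝 0) := by
    have h1 : ContinuousAt (fun x : ℝ => x ^ (1 - s : ℝ)) 0 :=
      Real.continuousAt_rpow_const 0 (1 - s) (Or.inr (by linarith))
    have h2 : Tendsto (fun z : ℂ => ‖z‖ ^ (1 - s : ℝ)) (𝓝 (0:ℂ)) (𝓝 ((0:ℝ) ^ (1 - s : ℝ))) := by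
      apply h1.tendsto.comp
      simpa using continuous_norm.tendsto (0:ℂ)
    rw [Real.zero_rpow (by linarith : (1 - s : ℝ) ≠ 0)] at h2
    have h3 : Tendsto (fun z : ℂ => C * ‖z‖ ^ (1 - s : ℝ)) (𝓝 (0:ℂ)) (𝓝 (C * 0)) :=
      h2.const_mul C
    rw [mul_zero] at h3
    exact h3.mono_left nhdsWithin_le_nhds
  have ho1 : g =o[𝓝[≠] (0:ℂ)] fun z => z⁻¹ := by
    rw [isLittleO_iff]
    intro ε hε
    filter_upwards [hmemne, hmem1, htend0.eventually (gt_mem_nhds hε)] with z hz hz1 hzε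
    have hz0 : (0:ℝ) < ‖z‖ := norm_pos_iff.2 hz
    have hsplit : ‖z‖ ^ (-s : ℝ) = ‖z‖ ^ (1 - s : ℝ) * ‖z‖⁻¹ := by
      rw [← Real.rpow_neg_one ‖z‖, ← Real.rpow_add hz0]
      ring_nf
    calc ‖g z‖ ≤ C * ‖z‖ ^ (-s : ℝ) := hbound z hz hz1
      _ = C * ‖z‖ ^ (1 - s : ℝ) * ‖z‖⁻¹ := by rw [hsplit]; ring
      _ ≤ ε * ‖z‖⁻¹ :=
          mul_le_mul_of_nonneg_right hzε.le (inv_nonneg.2 (norm_nonneg _))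
      _ = ε * ‖z⁻¹‖ := by rw [norm_inv]
  have hoc : (fun _ : ℂ => g 0) =o[𝓝[≠] (0:ℂ)] fun z => z⁻¹ := by
    rw [isLittleO_const_left]
    right
    have h1 : Tendsto (fun z : ℂ => ‖z‖) (𝓝[≠] (0:ℂ)) (𝓝[>] (0:ℝ)) := by
      apply tendsto_nhdsWithin_of_tendsto_nhds_of_eventually_within
      · exact (continuous_norm.tendsto' (0:ℂ) 0 (by simp)).mono_left nhdsWithin_le_nhds
      · filter_upwards [hmemne] with z hz
        exact norm_pos_iff.2 hz
    have h2 := h1.inv_tendsto_nhdsGT_zero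
    have : (norm ∘ fun z : ℂ => z⁻¹) = fun z : ℂ => (‖z‖)⁻¹ := by
      funext z; simp [norm_inv]
    rw [this]
    exact h2
  have ho : (fun z => g z - g 0) =o[𝓝[≠] (0:ℂ)] fun z => (z - 0)⁻¹ := by
    simpa using ho1.sub hoc
  have hdiff : ∀ᶠ z in 𝓝[≠] (0:ℂ), DifferentiableAt ℂ g z := by
    filter_upwards [hmemne] with z hz
    apply hgd.differentiableAt
    have : {z : ℂ | z ≠ 0} = {(0:ℂ)}ᶜ := by ext w; simp
    rw [this]
    exact isOpen_compl_singleton.mem_nhds (by simpa using hz)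
  have hlim := Complex.tendsto_limUnder_of_differentiable_on_punctured_nhds_of_isLittleO hdiff ho
  -- contradiction: along q⁻ᵐ, ‖g‖ blows up
  have hg1 : g 1 = f 1 := by simp [hg]
  have hg1ne : (0:ℝ) < ‖g 1‖ := by rw [hg1]; exact norm_pos_iff.2 hne
  set zs : ℕ → ℂ := fun m => ((q : ℂ)⁻¹) ^ m with hzs
  have hzsne : ∀ m, zs m ≠ 0 := fun m => pow_ne_zero _ (inv_ne_zero hqc)
  have hzst : Tendsto zs atTop (𝓝[≠] (0:ℂ)) := by
    apply tendsto_nhdsWithin_of_tendsto_nhds_of_eventually_within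
    · apply tendsto_pow_atTop_nhds_zero_of_norm_lt_one
      rw [norm_inv, Complex.norm_real, Real.norm_eq_abs, abs_of_pos hq0,
        inv_lt_one₀ hq0]
      exact hq
    · exact Eventually.of_forall fun m => by simpa using hzsne m
  have hcomp : Tendsto (fun m => ‖g (zs m)‖) atTop (𝓝 ‖limUnder (𝓝[≠] (0:ℂ)) g‖) :=
    ((hlim.comp hzst).norm)
  have heq : (fun m => ‖g (zs m)‖) = fun m => μ ^ m * ‖g 1‖ := by
    funext m
    have : zs m = ((q : ℂ)⁻¹) ^ m * 1 := by rw [mul_one]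
    rw [this, hiter m 1 one_ne_zero, norm_mul, Complex.norm_real, Real.norm_eq_abs,
      abs_of_pos (pow_pos hμ0 m)]
  have hatTop : Tendsto (fun m => μ ^ m * ‖g 1‖) atTop atTop :=
    (tendsto_pow_atTop_atTop_of_one_lt hμ1).atTop_mul_const hg1ne
  rw [heq] at hcomp
  exact not_tendsto_atTop_of_tendsto_nhds hcomp hatTop

/-- Pigeonhole: if antitone `b` is a rearrangement of antitone `a`, then `b ≤ a`. -/
lemma antitone_le_of_perm {n : ℕ} {a b : Fin n → ℝ} (ha : Antitone a) (hb : Antitone b)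
    (σ : Equiv.Perm (Fin n)) (h : ∀ i, b i = a (σ i)) : ∀ i, b i ≤ a i := by
  intro i
  have hex : ∃ j, j ≤ i ∧ i ≤ σ j := by
    by_contra hcontra
    push_neg at hcontra
    have hmap : ∀ j ∈ Finset.Iic i, σ j ∈ Finset.Iio i := fun j hj =>
      Finset.mem_Iio.2 (hcontra j (Finset.mem_Iic.1 hj))
    have hcard := Finset.card_le_card_of_injOn σ hmap (σ.injective.injOn)
    rw [Fin.card_Iic, Fin.card_Iio] at hcard
    omega
  obtain ⟨j, hji, hij⟩ := hex
  calc b i ≤ b j := hb hji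
    _ = a (σ j) := h j
    _ ≤ a i := ha hij

/-- Facts about an antitone tuple summing to zero with window ≤ 1. -/
lemma window_facts {n : ℕ} (hn : 0 < n) {a : Fin n → ℝ} (ha : Antitone a)
    (hsum : ∑ i, a i = 0) (hwin : a ⟨0, hn⟩ ≤ 1 + a ⟨n - 1, Nat.sub_lt hn one_pos⟩) :
    (∀ x y, a x - a y ≤ 1) ∧ (∀ x, a x < 1) ∧ (∀ x, -1 < a x) := by
  set i0 : Fin n := ⟨0, hn⟩ with hi0
  set iN : Fin n := ⟨n - 1, Nat.sub_lt hn one_pos⟩ with hiN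
  have h0 : ∀ x : Fin n, a x ≤ a i0 := fun x => ha (by simp [hi0, Fin.le_def])
  have hN : ∀ x : Fin n, a iN ≤ a x := fun x =>
    ha (by simp [hiN, Fin.le_def]; omega)
  refine ⟨fun x y => by linarith [h0 x, hN y], ?_, ?_⟩
  · intro x
    by_contra hc
    push_neg at hc
    have hx1 : (1:ℝ) ≤ a i0 := le_trans hc (h0 x)
    have hsplit : ∑ i, a i = a i0 + ∑ i ∈ Finset.univ.erase i0, a i :=
      (Finset.add_sum_erase _ _ (Finset.mem_univ _)).symm
    have hpos : (0:ℝ) ≤ ∑ i ∈ Finset.univ.erase i0, a i :=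
      Finset.sum_nonneg fun i _ => by linarith [hN i]
    linarith [hsplit ▸ hsum]
  · intro x
    by_contra hc
    push_neg at hc
    have hxN : a iN ≤ -1 := le_trans (hN x) hc
    have hsplit : ∑ i, a i = a iN + ∑ i ∈ Finset.univ.erase iN, a i :=
      (Finset.add_sum_erase _ _ (Finset.mem_univ _)).symm
    have hneg : ∑ i ∈ Finset.univ.erase iN, a i ≤ 0 :=
      Finset.sum_nonpos fun i _ => by linarith [h0 i]
    linarith [hsplit ▸ hsum]

/-- Two dominant elements `(diag(d),q)` and `(diag(d'),q)` of `Â⁺` (with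
`d₁ ≥ … ≥ dₙ > 0`, `∏dᵢ = 1`, `d₁ ≤ q·dₙ`, and likewise for `d'`) that are conjugate by a
holomorphic loop `u` (i.e. `u(z)·diag(d) = diag(d')·u(q⁻¹z)` on `ℂ*`) are equal. -/
theorem dominant_conjugate_eq (n : ℕ) (hn : 0 < n) (q : ℝ) (hq : 1 < q)
    (d d' : Fin n → ℝ)
    (hd : Antitone d) (hdpos : ∀ i, 0 < d i) (hdprod : (∏ i, d i) = 1)
    (hdq : d ⟨0, hn⟩ ≤ q * d ⟨n - 1, Nat.sub_lt hn one_pos⟩)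
    (hd' : Antitone d') (hd'pos : ∀ i, 0 < d' i) (hd'prod : (∏ i, d' i) = 1)
    (hd'q : d' ⟨0, hn⟩ ≤ q * d' ⟨n - 1, Nat.sub_lt hn one_pos⟩)
    (u : ℂ → Matrix (Fin n) (Fin n) ℂ) (hu : IsHolLoop n u)
    (hconj : ∀ z : ℂ, z ≠ 0 →
      u z * Matrix.diagonal (fun i => (d i : ℂ)) =
        Matrix.diagonal (fun i => (d' i : ℂ)) * u ((q : ℂ)⁻¹ * z)) :
    ∀ i, d i = d' i := by
  have hq0 : (0:ℝ) < q := lt_trans one_pos hq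
  have hqne1 : q ≠ 1 := ne_of_gt hq
  set a : Fin n → ℝ := fun i => Real.logb q (d i) with ha_def
  set b : Fin n → ℝ := fun i => Real.logb q (d' i) with hb_def
  have ha_anti : Antitone a := fun i j hij =>
    Real.logb_le_logb_of_le hq (hdpos j) (hd hij)
  have hb_anti : Antitone b := fun i j hij =>
    Real.logb_le_logb_of_le hq (hd'pos j) (hd' hij)
  have hsum_gen : ∀ (e : Fin n → ℝ), (∀ i, 0 < e i) → (∏ i, e i) = 1 →
      ∑ i, Real.logb q (e i) = 0 := by
    intro e hpos hprod
    simp only [Real.logb]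
    rw [← Finset.sum_div, ← Real.log_prod (fun i _ => (hpos i).ne'), hprod,
      Real.log_one, zero_div]
  have ha_sum : ∑ i, a i = 0 := hsum_gen d hdpos hdprod
  have hb_sum : ∑ i, b i = 0 := hsum_gen d' hd'pos hd'prod
  have hwin_gen : ∀ (e : Fin n → ℝ), (∀ i, 0 < e i) →
      e ⟨0, hn⟩ ≤ q * e ⟨n - 1, Nat.sub_lt hn one_pos⟩ →
      Real.logb q (e ⟨0, hn⟩) ≤ 1 + Real.logb q (e ⟨n - 1, Nat.sub_lt hn one_pos⟩) := by
    intro e hpos hwin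
    calc Real.logb q (e ⟨0, hn⟩)
        ≤ Real.logb q (q * e ⟨n - 1, Nat.sub_lt hn one_pos⟩) :=
          Real.logb_le_logb_of_le hq (hpos _) hwin
      _ = 1 + Real.logb q (e ⟨n - 1, Nat.sub_lt hn one_pos⟩) := by
          rw [Real.logb_mul (ne_of_gt hq0) (ne_of_gt (hpos _)),
            Real.logb_self_eq_one hq]
  obtain ⟨hadiff, halt1, hagt⟩ := window_facts hn ha_anti ha_sum (hwin_gen d hdpos hdq)
  obtain ⟨hbdiff, hblt1, hbgt⟩ := window_facts hn hb_anti hb_sum (hwin_gen d' hd'pos hd'q)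
  -- a permutation with nonzero entries of u 1
  have hdet : (u 1).det ≠ 0 :=
    ((Matrix.isUnit_iff_isUnit_det _).1 (hu.2 1 one_ne_zero)).ne_zero
  have hexσ : ∃ σ : Equiv.Perm (Fin n), ∀ i, u 1 (σ i) i ≠ 0 := by
    by_contra hc
    push_neg at hc
    apply hdet
    rw [Matrix.det_apply]
    apply Finset.sum_eq_zero
    intro σ _
    obtain ⟨i, hi⟩ := hc σ
    have hz : ∏ j, u 1 (σ j) j = 0 := Finset.prod_eq_zero (Finset.mem_univ i) hi
    rw [hz, smul_zero]
  obtain ⟨σ, hσ⟩ := hexσ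
  -- each nonzero entry forces an integer relation
  have hentry : ∀ i : Fin n, ∃ m : ℤ, d i / d' (σ i) = q ^ m := by
    intro i
    have hfe : ∀ z : ℂ, z ≠ 0 →
        u ((q : ℂ)⁻¹ * z) (σ i) i = ((d i / d' (σ i) : ℝ) : ℂ) * u z (σ i) i := by
      intro z hz
      have h := hconj z hz
      have h2 := congrFun (congrFun h (σ i)) i
      rw [Matrix.mul_diagonal, Matrix.diagonal_mul] at h2
      have hne' : ((d' (σ i) : ℝ) : ℂ) ≠ 0 := by
        exact_mod_cast (hd'pos (σ i)).ne'
      push_cast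
      rw [div_mul_eq_mul_div, eq_div_iff hne']
      linear_combination -h2
    obtain ⟨m, hm⟩ := key_analytic hq (div_pos (hdpos i) (hd'pos (σ i)))
      (hu.1 (σ i) i) hfe (hσ i)
    exact ⟨m, hm⟩
  choose m' hm' using hentry
  set k : Fin n → ℤ := fun i => -m' i with hk_def
  have hbk : ∀ i, b (σ i) = a i + k i := by
    intro i
    have h1 : Real.logb q (d i / d' (σ i)) = a i - b (σ i) :=
      Real.logb_div (hdpos i).ne' (hd'pos (σ i)).ne'
    have h2 : Real.logb q ((q : ℝ) ^ (m' i)) = (m' i : ℝ) := by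
      rw [← Real.rpow_intCast, Real.logb_rpow hq0 hqne1]
    rw [hm' i, h2] at h1
    simp only [hk_def]
    push_cast
    linarith
  have hkrange : ∀ i, -1 ≤ k i ∧ k i ≤ 1 := by
    intro i
    have h1 : ((k i : ℤ) : ℝ) = b (σ i) - a i := by linarith [hbk i]
    have h2 : ((k i : ℤ) : ℝ) < 2 := by
      rw [h1]; linarith [hblt1 (σ i), hagt i]
    have h3 : (-2 : ℝ) < ((k i : ℤ) : ℝ) := by
      rw [h1]; linarith [hbgt (σ i), halt1 i]
    have h2' : k i < 2 := by exact_mod_cast h2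
    have h3' : -2 < k i := by exact_mod_cast h3
    omega
  have hsumk : ∑ i, k i = 0 := by
    have h1 : ((∑ i, k i : ℤ) : ℝ) = ∑ i, (b (σ i) - a i) := by
      push_cast
      apply Finset.sum_congr rfl
      intro i _
      linarith [hbk i]
    have h2 : ∑ i, (b (σ i) - a i) = 0 := by
      rw [Finset.sum_sub_distrib, Equiv.sum_comp σ b, hb_sum, ha_sum, sub_zero]
    rw [h2] at h1
    exact_mod_cast h1
  -- the two filter sets
  set Sp : Finset (Fin n) := Finset.univ.filter (fun i => k i = 1) with hSp
  set Sm : Finset (Fin n) := Finset.univ.filter (fun i => k i = -1) with hSm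
  have hmemp : ∀ i, i ∈ Sp ↔ k i = 1 := fun i => by simp [hSp]
  have hmemm : ∀ i, i ∈ Sm ↔ k i = -1 := fun i => by simp [hSm]
  have hcard : Sp.card = Sm.card := by
    have hsplit : ∑ i, k i = (Sp.card : ℤ) - (Sm.card : ℤ) := by
      rw [← Finset.sum_filter_add_sum_filter_not Finset.univ (fun i => k i = 1) k]
      have e1 : ∑ i ∈ Finset.univ.filter (fun i => k i = 1), k i = (Sp.card : ℤ) := by
        rw [Finset.sum_congr rfl (fun i hi => (Finset.mem_filter.1 hi).2)]
        simp [hSp]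
      have e2 : ∑ i ∈ Finset.univ.filter (fun i => ¬ k i = 1), k i = -(Sm.card : ℤ) := by
        rw [← Finset.sum_filter_add_sum_filter_not
          (Finset.univ.filter (fun i => ¬ k i = 1)) (fun i => k i = -1) k]
        have e3 : (Finset.univ.filter (fun i => ¬ k i = 1)).filter (fun i => k i = -1)
            = Sm := by
          rw [Finset.filter_filter]
          apply Finset.filter_congr
          intro i _
          constructor
          · exact fun h => h.2
          · intro h; exact ⟨by omega, h⟩
        have e4 : ∑ i ∈ (Finset.univ.filter (fun i => ¬ k i = 1)).filter
            (fun i => ¬ k i = -1), k i = 0 := by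
          apply Finset.sum_eq_zero
          intro i hi
          simp only [Finset.mem_filter] at hi
          have := hkrange i
          omega
        rw [e3, e4, add_zero]
        rw [Finset.sum_congr rfl (fun i hi => (Finset.mem_filter.1 hi).2)]
        simp [hSm]
      rw [e1, e2]
      ring
    rw [hsumk] at hsplit
    omega
  set τ : {x // x ∈ Sp} ≃ {x // x ∈ Sm} := Finset.equivOfCardEq hcard with hτ
  have hdisj : ∀ x : Fin n, x ∈ Sp → x ∈ Sm → False := by
    intro x h1 h2
    rw [hmemp] at h1
    rw [hmemm] at h2
    omega
  set π : Fin n → Fin n := fun i =>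
    if h : i ∈ Sp then (τ ⟨i, h⟩ : Fin n)
    else if h' : i ∈ Sm then (τ.symm ⟨i, h'⟩ : Fin n) else i with hπ
  have hπinv : Function.Involutive π := by
    intro i
    by_cases h : i ∈ Sp
    · have hmem : ((τ ⟨i, h⟩ : Fin n)) ∈ Sm := (τ ⟨i, h⟩).2
      have hnot : ((τ ⟨i, h⟩ : Fin n)) ∉ Sp := fun hc => hdisj _ hc hmem
      simp only [hπ, dif_pos h]
      rw [dif_neg hnot, dif_pos hmem]
      have he : (⟨(τ ⟨i, h⟩ : Fin n), hmem⟩ : {x // x ∈ Sm}) = τ ⟨i, h⟩ := rfl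
      rw [he, Equiv.symm_apply_apply]
    · by_cases h' : i ∈ Sm
      · have hmem : ((τ.symm ⟨i, h'⟩ : Fin n)) ∈ Sp := (τ.symm ⟨i, h'⟩).2
        simp only [hπ, dif_neg h, dif_pos h', dif_pos hmem]
        have he : (⟨(τ.symm ⟨i, h'⟩ : Fin n), hmem⟩ : {x // x ∈ Sp}) = τ.symm ⟨i, h'⟩ := rfl
        rw [he, Equiv.apply_symm_apply]
      · simp only [hπ, dif_neg h, dif_neg h']
  -- forced equality between extreme values
  have hforce : ∀ x y : Fin n, k x = 1 → k y = -1 → a y - a x = 1 := by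
    intro x y hx hy
    have h1 : b (σ x) = a x + 1 := by
      have := hbk x; rw [hx] at this; push_cast at this; linarith
    have h2 : b (σ y) = a y - 1 := by
      have := hbk y; rw [hy] at this; push_cast at this; linarith
    have h3 := hbdiff (σ x) (σ y)
    have h4 := hadiff y x
    linarith
  set σ' : Equiv.Perm (Fin n) := (hπinv.toPerm π).trans σ with hσ'
  have hfinal : ∀ i, b (σ' i) = a i := by
    intro i
    have happ : σ' i = σ (π i) := by
      simp [hσ', Equiv.trans_apply, Function.Involutive.coe_toPerm]
    rw [happ]
    by_cases h : i ∈ Sp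
    · have hki : k i = 1 := (hmemp i).1 h
      have hπi : π i = (τ ⟨i, h⟩ : Fin n) := by simp [hπ, h]
      have hmem : ((τ ⟨i, h⟩ : Fin n)) ∈ Sm := (τ ⟨i, h⟩).2
      have hkj : k ((τ ⟨i, h⟩ : Fin n)) = -1 := (hmemm _).1 hmem
      rw [hπi, hbk, hkj]
      have := hforce i _ hki hkj
      push_cast
      linarith
    · by_cases h' : i ∈ Sm
      · have hki : k i = -1 := (hmemm i).1 h'
        have hπi : π i = (τ.symm ⟨i, h'⟩ : Fin n) := by simp [hπ, h, h']
        have hmem : ((τ.symm ⟨i, h'⟩ : Fin n)) ∈ Sp := (τ.symm ⟨i, h'⟩).2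
        have hkj : k ((τ.symm ⟨i, h'⟩ : Fin n)) = 1 := (hmemp _).1 hmem
        rw [hπi, hbk, hkj]
        have := hforce _ i hkj hki
        push_cast
        linarith
      · have hki : k i = 0 := by
          have h1 : ¬ k i = 1 := fun hc => h ((hmemp i).2 hc)
          have h2 : ¬ k i = -1 := fun hc => h' ((hmemm i).2 hc)
          have := hkrange i
          omega
        have hπi : π i = i := by simp [hπ, h, h']
        rw [hπi, hbk, hki]
        push_cast
        ring
  -- conclude a = b
  have hab : ∀ i, a i = b i := by
    have h1 : ∀ i, b i ≤ a i := by
      apply antitone_le_of_perm ha_anti hb_anti σ'.symm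
      intro j
      have := hfinal (σ'.symm j)
      rw [Equiv.apply_symm_apply] at this
      exact this
    have h2 : ∀ i, a i ≤ b i :=
      antitone_le_of_perm hb_anti ha_anti σ' (fun i => (hfinal i).symm)
    exact fun i => le_antisymm (h2 i) (h1 i)
  intro i
  have := hab i
  have hda : d i = q ^ a i := (Real.rpow_logb hq0 hqne1 (hdpos i)).symm
  have hdb : d' i = q ^ b i := (Real.rpow_logb hq0 hqne1 (hd'pos i)).symm
  rw [hda, hdb, this]
end
end

section
/- Let n ≥ 1 and let q > 1 be real. For any real numbers d₁, …, dₙ > 0 there exist a holomorphic map u : ℂ* → GL(n,ℂ) and real numbers d'₁ ≥ … ≥ d'ₙ > 0 with d'₁ ≤ q·d'ₙ such that u(z)·diag(d₁,…,dₙ)·u(q⁻¹·z)⁻¹ = diag(d'₁,…,d'ₙ) for all z ∈ ℂ*. (Every positive-diagonal element (diag(d),q) of the holomorphic loop group is conjugate to an element of the dominant set Â⁺; the conjugating loop can be taken to be a monomial matrix whose nonzero entries are integer powers of z.) -/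
open Matrix Complex

noncomputable section

/-- Every positive-diagonal element `(diag(d),q)` of the holomorphic loop group is
conjugate to an element of the dominant set `Â⁺`: there exist a holomorphic loop `u`
and reals `d'₁ ≥ … ≥ d'ₙ > 0` with `d'₁ ≤ q·d'ₙ` such that
`u(z)·diag(d)·u(q⁻¹z)⁻¹ = diag(d')` for all `z ∈ ℂ*`. -/
theorem diagonal_conjugate_to_dominant (n : ℕ) (hn : 0 < n) (q : ℝ) (hq : 1 < q)
    (d : Fin n → ℝ) (hdpos : ∀ i, 0 < d i) :
    ∃ (u : ℂ → Matrix (Fin n) (Fin n) ℂ) (d' : Fin n → ℝ),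
      IsHolLoop n u ∧ Antitone d' ∧ (∀ i, 0 < d' i) ∧
      d' ⟨0, hn⟩ ≤ q * d' ⟨n - 1, Nat.sub_lt hn one_pos⟩ ∧
      ∀ z : ℂ, z ≠ 0 →
        u z * Matrix.diagonal (fun i => (d i : ℂ)) * (u ((q : ℂ)⁻¹ * z))⁻¹ =
          Matrix.diagonal (fun i => (d' i : ℂ)) := by
  have hq0 : (0:ℝ) < q := lt_trans one_pos hq
  have hqC : (q:ℂ) ≠ 0 := by exact_mod_cast hq0.ne'
  set m : Fin n → ℤ := fun i => -⌊Real.logb q (d i)⌋ with hm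
  set e : Fin n → ℝ := fun i => d i * q ^ (m i) with he
  have he_eq : ∀ i, e i = q ^ (Real.logb q (d i) + (m i : ℝ)) := by
    intro i
    rw [Real.rpow_add hq0, Real.rpow_logb hq0 hq.ne' (hdpos i), Real.rpow_intCast]
  have he_ge : ∀ i, 1 ≤ e i := by
    intro i
    rw [he_eq i]
    have h0 : (0:ℝ) ≤ Real.logb q (d i) + (m i : ℝ) := by
      have := Int.floor_le (Real.logb q (d i))
      simp only [hm]
      push_cast
      linarith
    calc (1:ℝ) = q ^ (0:ℝ) := (Real.rpow_zero q).symm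
    _ ≤ _ := Real.rpow_le_rpow_of_exponent_le hq.le h0
  have he_lt : ∀ i, e i < q := by
    intro i
    rw [he_eq i]
    have h1 : Real.logb q (d i) + (m i : ℝ) < 1 := by
      have := Int.lt_floor_add_one (Real.logb q (d i))
      simp only [hm]
      push_cast
      linarith
    calc q ^ (Real.logb q (d i) + (m i : ℝ)) < q ^ (1:ℝ) :=
      Real.rpow_lt_rpow_of_exponent_lt hq h1
    _ = q := Real.rpow_one q
  set σ : Equiv.Perm (Fin n) := Tuple.sort (fun i => -e i) with hσ
  have hmono : Monotone ((fun i => -e i) ∘ σ) := Tuple.monotone_sort _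
  set d' : Fin n → ℝ := fun i => e (σ i) with hd'
  set u : ℂ → Matrix (Fin n) (Fin n) ℂ :=
    fun z => Matrix.of fun i j => if σ i = j then z ^ m j else 0 with hu
  set v : ℂ → Matrix (Fin n) (Fin n) ℂ :=
    fun z => Matrix.of fun i j => if i = σ j then z ^ (-(m i)) else 0 with hv
  have huv : ∀ z : ℂ, z ≠ 0 → u z * v z = 1 := by
    intro z hz
    ext i k
    simp only [hu, hv, Matrix.mul_apply, Matrix.of_apply, ite_mul, zero_mul,
      Finset.sum_ite_eq, Finset.mem_univ, if_true, Equiv.apply_eq_iff_eq,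
      Matrix.one_apply]
    by_cases h : i = k
    · simp [h, _root_.zpow_neg, mul_inv_cancel₀ (zpow_ne_zero _ hz)]
    · simp [h]
  have hinv : ∀ z : ℂ, z ≠ 0 → (u z)⁻¹ = v z := fun z hz =>
    Matrix.inv_eq_right_inv (huv z hz)
  refine ⟨u, d', ⟨?_, ?_⟩, ?_, ?_, ?_, ?_⟩
  · intro i j
    simp only [hu, Matrix.of_apply]
    by_cases h : σ i = j
    · simp only [h, if_true]
      exact fun z hz => (differentiableAt_zpow.mpr (Or.inl hz)).differentiableWithinAt
    · simp only [h, if_false]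
      exact differentiableOn_const 0
  · exact fun z hz => ⟨⟨u z, v z, huv z hz, mul_eq_one_comm.mp (huv z hz)⟩, rfl⟩
  · intro i j hij
    have := hmono hij
    simp only [Function.comp_apply] at this
    simp only [hd']
    linarith
  · intro i
    have := he_ge (σ i)
    simp only [hd']
    linarith
  · have h1 := he_lt (σ ⟨0, hn⟩)
    have h2 := he_ge (σ ⟨n - 1, Nat.sub_lt hn one_pos⟩)
    simp only [hd']
    nlinarith
  · intro z hz
    have hw : ((q:ℂ)⁻¹ * z) ≠ 0 := mul_ne_zero (inv_ne_zero hqC) hz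
    rw [hinv _ hw]
    ext i k
    rw [Matrix.mul_apply, Matrix.diagonal_apply]
    have hentry : ∀ j, (u z * Matrix.diagonal (fun i => (d i : ℂ))) i j
        = if σ i = j then z ^ m j * (d j : ℂ) else 0 := by
      intro j
      rw [Matrix.mul_diagonal, hu]
      simp [ite_mul]
    rw [Finset.sum_congr rfl (fun j _ => by rw [hentry j])]
    simp only [hv, Matrix.of_apply, ite_mul, zero_mul, mul_ite, mul_zero,
      Finset.sum_ite_eq, Finset.sum_ite_eq', Finset.mem_univ, if_true]
    by_cases h : i = k
    · subst h
      rw [if_pos rfl, if_pos rfl]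
      have hc : ((d' i : ℝ) : ℂ) = (d (σ i) : ℂ) * (q : ℂ) ^ (m (σ i)) := by
        simp only [hd', he]
        push_cast
        ring
      rw [hc]
      have hzk : z ^ (⌊Real.logb q (d (σ i))⌋) ≠ 0 := zpow_ne_zero _ hz
      have hqk : (q:ℂ) ^ (⌊Real.logb q (d (σ i))⌋) ≠ 0 := zpow_ne_zero _ hqC
      simp only [hm, mul_zpow, _root_.inv_zpow, _root_.zpow_neg, inv_inv, neg_neg]
      field_simp
    · have h2 : ¬ σ i = σ k := fun hc => h (σ.injective hc)
      simp [h, h2]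
end
end

section
/- Let q ∈ ℂ with |q| > 1 and let g : ℂ* → ℂ* be a holomorphic nonvanishing function admitting a holomorphic logarithm, i.e. g = exp ∘ f for some holomorphic f : ℂ* → ℂ. Then: (i) there exist a holomorphic nonvanishing u : ℂ* → ℂ* and a constant c ∈ ℂ* such that g(z) = c·u(z)·u(q⁻¹·z)⁻¹ for all z ∈ ℂ*; and (ii) for constants c, c' ∈ ℂ*, there exists a holomorphic nonvanishing w : ℂ* → ℂ* with c' = c·w(z)·w(q⁻¹·z)⁻¹ for all z ∈ ℂ* if and only if c'/c = qᵐ for some integer m ∈ ℤ. (Hence the constant c in (i) is unique up to multiplication by integer powers of q.) -/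
set_option maxHeartbeats 1000000

open Complex Metric Set

noncomputable section

def Complex.abs : AbsoluteValue ℂ ℝ := IsAbsoluteValue.toAbsoluteValue (norm : ℂ → ℝ)

lemma Complex.norm_eq_abs (z : ℂ) : ‖z‖ = Complex.abs z := rfl

lemma Complex.abs_apply (z : ℂ) : Complex.abs z = ‖z‖ := rfl

lemma Complex.continuous_abs : Continuous Complex.abs := continuous_norm

lemma abs_inv_pow_lt {q : ℂ} (hq : 1 < Complex.abs q) {n : ℕ} (hn : n ≠ 0) :
    Complex.abs (q⁻¹ ^ n) ≤ (Complex.abs q)⁻¹ := by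
  rw [map_pow, map_inv₀]
  calc (Complex.abs q)⁻¹ ^ n ≤ (Complex.abs q)⁻¹ ^ 1 := by
        apply pow_le_pow_of_le_one (by positivity)
        · rw [inv_le_one_iff₀]; right; exact hq.le
        · omega
    _ = (Complex.abs q)⁻¹ := pow_one _

lemma one_sub_inv_pow_lb {q : ℂ} (hq : 1 < Complex.abs q) {n : ℕ} (hn : n ≠ 0) :
    1 - (Complex.abs q)⁻¹ ≤ Complex.abs (1 - q⁻¹ ^ n) := by
  have h1 := abs_inv_pow_lt hq hn
  calc 1 - (Complex.abs q)⁻¹ ≤ Complex.abs 1 - Complex.abs (q⁻¹ ^ n) := by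
        simp only [map_one]; linarith
    _ ≤ Complex.abs (1 - q⁻¹ ^ n) := by
        simpa [Complex.abs_apply] using norm_sub_norm_le (1 : ℂ) (q⁻¹ ^ n)

lemma one_sub_inv_pow_ne {q : ℂ} (hq : 1 < Complex.abs q) {n : ℕ} (hn : n ≠ 0) :
    (1 : ℂ) - q⁻¹ ^ n ≠ 0 := by
  intro h
  have := one_sub_inv_pow_lb hq hn
  rw [h, map_zero] at this
  have h2 : (0:ℝ) < 1 - (Complex.abs q)⁻¹ := by
    rw [sub_pos, inv_lt_one_iff₀]; right; exact hq
  linarith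

lemma solve_coboundary {q : ℂ} (hq : 1 < Complex.abs q) {ψ : ℂ → ℂ}
    (hψ : Differentiable ℂ ψ) (h0 : ψ 0 = 0) :
    ∃ H : ℂ → ℂ, Differentiable ℂ H ∧ ∀ w : ℂ, H w - H (q⁻¹ * w) = ψ w := by
  have hCpos : (0:ℝ) < 1 - (Complex.abs q)⁻¹ := by
    rw [sub_pos, inv_lt_one_iff₀]; right; exact hq
  set a : ℕ → ℂ := fun n => (n.factorial : ℂ)⁻¹ * iteratedDeriv n ψ 0 with ha
  have hsum : ∀ z : ℂ, HasSum (fun n => a n * z ^ n) (ψ z) := by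
    intro z
    have h := hasSum_taylorSeries_of_entire hψ 0 z
    have he : (fun n : ℕ => a n * z ^ n)
        = fun n : ℕ => (n.factorial : ℂ)⁻¹ • (z - 0) ^ n • iteratedDeriv n ψ 0 := by
      funext n; simp [ha, smul_eq_mul]; ring
    rw [he]; exact h
  have ha0 : a 0 = 0 := by simp [ha, iteratedDeriv_zero, h0]
  set d : ℕ → ℂ := fun n => if n = 0 then 0 else (1 - q⁻¹ ^ n)⁻¹ with hd
  set b : ℕ → ℂ := fun n => d n * a n with hb
  set C : ℝ := (1 - (Complex.abs q)⁻¹)⁻¹ with hC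
  have hCpos' : 0 < C := by positivity
  have hdle : ∀ n, Complex.abs (d n) ≤ C := by
    intro n
    rcases eq_or_ne n 0 with rfl | hn
    · simp [hd]; positivity
    · simp only [hd, if_neg hn, map_inv₀]
      exact inv_anti₀ hCpos (one_sub_inv_pow_lb hq hn)
  set p := FormalMultilinearSeries.ofScalars ℂ b with hp
  have hpn : ∀ n, ‖p n‖ = Complex.abs (b n) := by
    intro n; rw [hp, FormalMultilinearSeries.ofScalars_norm]; rfl
  have hrad : p.radius = ⊤ := by
    apply FormalMultilinearSeries.radius_eq_top_of_summable_norm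
    intro r
    have h1 : Summable (fun n => Complex.abs (a n) * (r:ℝ) ^ n) := by
      have hs := (hsum ((r:ℝ):ℂ)).summable
      have hs2 := summable_norm_iff.2 hs
      have he : (fun n => ‖a n * ((r:ℝ):ℂ) ^ n‖) = fun n => Complex.abs (a n) * (r:ℝ) ^ n := by
        funext n
        simp [norm_mul, norm_pow, Complex.norm_real, Real.norm_eq_abs,
          _root_.abs_of_nonneg r.coe_nonneg, Complex.abs_apply]
      rwa [he] at hs2
    apply Summable.of_nonneg_of_le (fun n => by positivity)
      (fun n => ?_) (h1.mul_left C)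
    rw [hpn]
    calc Complex.abs (b n) * (r:ℝ) ^ n
        ≤ (C * Complex.abs (a n)) * (r:ℝ)^n := by
          apply mul_le_mul_of_nonneg_right _ (by positivity)
          rw [hb, map_mul]
          exact mul_le_mul_of_nonneg_right (hdle n) (by positivity)
      _ = C * (Complex.abs (a n) * (r:ℝ) ^ n) := by ring
  set H := p.sum with hH
  have hball : HasFPowerSeriesOnBall H p 0 ⊤ := by
    have := p.hasFPowerSeriesOnBall (by rw [hrad]; exact ENNReal.zero_lt_top)
    rwa [hrad] at this
  have hHdiff : Differentiable ℂ H := by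
    intro z
    apply (hball.differentiableOn.differentiableAt (x := z))
    exact EMetric.isOpen_ball.mem_nhds (by simp [EMetric.mem_ball, edist_lt_top])
  have hHsum : ∀ w : ℂ, HasSum (fun n => b n * w ^ n) (H w) := by
    intro w
    have h := hball.hasSum (y := w) (by simp [EMetric.mem_ball, edist_lt_top])
    rw [zero_add] at h
    have he : (fun n => p n fun _ => w) = fun n => b n * w ^ n := by
      funext n; rw [hp, FormalMultilinearSeries.ofScalars_apply_eq, smul_eq_mul]
    rwa [he] at h
  refine ⟨H, hHdiff, fun w => ?_⟩
  have h2' : HasSum (fun n => b n * q⁻¹ ^ n * w ^ n) (H (q⁻¹ * w)) := by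
    have := hHsum (q⁻¹ * w)
    have he : (fun n => b n * (q⁻¹ * w) ^ n) = fun n => b n * q⁻¹ ^ n * w ^ n := by
      funext n; rw [mul_pow]; ring
    rwa [he] at this
  have h3 := (hHsum w).sub h2'
  have he : (fun n => b n * w ^ n - b n * q⁻¹ ^ n * w ^ n) = fun n => a n * w ^ n := by
    funext n
    rcases eq_or_ne n 0 with rfl | hn
    · simp [hb, hd, ha0]
    · have hne := one_sub_inv_pow_ne hq hn
      have hbn : b n = (1 - q⁻¹ ^ n)⁻¹ * a n := by simp [hb, hd, if_neg hn]
      rw [hbn]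
      have h5 : (1 - q⁻¹ ^ n)⁻¹ * a n * w ^ n - (1 - q⁻¹ ^ n)⁻¹ * a n * q⁻¹ ^ n * w ^ n
          = ((1 - q⁻¹ ^ n)⁻¹ * (1 - q⁻¹ ^ n)) * (a n * w ^ n) := by ring
      rw [h5, inv_mul_cancel₀ hne, one_mul]
  rw [he] at h3
  exact (h3.unique (hsum w))

lemma constant_unique {q : ℂ} (hq : 1 < Complex.abs q) {w : ℂ → ℂ} {lam : ℂ} (hlam : lam ≠ 0)
    (hwd : DifferentiableOn ℂ w {z : ℂ | z ≠ 0}) (hwne : ∀ z : ℂ, z ≠ 0 → w z ≠ 0)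
    (hrel : ∀ z : ℂ, z ≠ 0 → w z = lam * w (q⁻¹ * z)) :
    ∃ m : ℤ, lam = q ^ m := by
  have hq0 : q ≠ 0 := by
    intro h; rw [h, map_zero] at hq; linarith
  have hopen : IsOpen {z : ℂ | z ≠ 0} := isOpen_ne
  have hwat : ∀ z : ℂ, z ≠ 0 → DifferentiableAt ℂ w z :=
    fun z hz => hwd.differentiableAt (hopen.mem_nhds hz)
  have hA : AnalyticOnNhd ℂ w {z : ℂ | z ≠ 0} := hwd.analyticOnNhd hopen
  have hdat : ∀ z : ℂ, z ≠ 0 → DifferentiableAt ℂ (deriv w) z :=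
    fun z hz => (hA.deriv z hz).differentiableAt
  -- derivative of the relation
  have hderiv : ∀ z : ℂ, z ≠ 0 → deriv w z = lam * (deriv w (q⁻¹ * z) * q⁻¹) := by
    intro z hz
    have hz' : q⁻¹ * z ≠ 0 := mul_ne_zero (inv_ne_zero hq0) hz
    have hEq : w =ᶠ[nhds z] fun x => lam * w (q⁻¹ * x) := by
      filter_upwards [hopen.mem_nhds hz] with x hx
      exact hrel x hx
    have hin : HasDerivAt (fun x : ℂ => q⁻¹ * x) q⁻¹ z := by
      simpa using (hasDerivAt_id z).const_mul q⁻¹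
    have hout : HasDerivAt w (deriv w (q⁻¹ * z)) (q⁻¹ * z) := (hwat _ hz').hasDerivAt
    have hcomp : HasDerivAt (fun x => w (q⁻¹ * x)) (deriv w (q⁻¹ * z) * q⁻¹) z :=
      HasDerivAt.comp z hout hin
    have : HasDerivAt (fun x => lam * w (q⁻¹ * x)) (lam * (deriv w (q⁻¹ * z) * q⁻¹)) z :=
      hcomp.const_mul lam
    rw [hEq.deriv_eq]
    exact this.deriv
  set ψ : ℂ → ℂ := fun z => z * deriv w z / w z with hψ
  have hψat : ∀ z : ℂ, z ≠ 0 → DifferentiableAt ℂ ψ z := by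
    intro z hz
    exact (differentiableAt_id.mul (hdat z hz)).div (hwat z hz) (hwne z hz)
  have hψinv : ∀ z : ℂ, z ≠ 0 → ψ (q * z) = ψ z := by
    intro z hz
    have hz' : q * z ≠ 0 := mul_ne_zero hq0 hz
    have e1 : q⁻¹ * (q * z) = z := inv_mul_cancel_left₀ hq0 z
    have e2 : deriv w (q * z) = lam * (deriv w z * q⁻¹) := by
      rw [hderiv (q * z) hz', e1]
    have e3 : w (q * z) = lam * w z := by rw [hrel (q * z) hz', e1]
    rw [hψ]
    simp only [e2, e3]
    field_simp [hq0, hlam, hwne z hz]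
  -- invariance under all integer powers
  have hψzpow : ∀ m : ℤ, ∀ z : ℂ, z ≠ 0 → ψ (q ^ m * z) = ψ z := by
    intro m
    induction m using Int.induction_on with
    | zero => intro z hz; simp
    | succ n ih =>
      intro z hz
      have h1 : q ^ ((n : ℤ) + 1) * z = q * (q ^ (n : ℤ) * z) := by
        rw [zpow_add₀ hq0, zpow_one]; ring
      rw [h1, hψinv _ (mul_ne_zero (zpow_ne_zero _ hq0) hz), ih z hz]
    | pred n ih =>
      intro z hz
      have hz0 : q ^ (-(n : ℤ) - 1) * z ≠ 0 := mul_ne_zero (zpow_ne_zero _ hq0) hz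
      have h1 : q * (q ^ (-(n : ℤ) - 1) * z) = q ^ (-(n : ℤ)) * z := by
        rw [← mul_assoc, mul_comm q, ← zpow_add_one₀ hq0]
        norm_num
      have h2 := hψinv _ hz0
      rw [h1] at h2
      rw [← h2]
      exact ih z hz
  -- bound on a fundamental annulus
  set K : Set ℂ := closedBall (0:ℂ) (Complex.abs q) \ ball (0:ℂ) 1 with hK
  have hKsub : K ⊆ {z : ℂ | z ≠ 0} := by
    rintro z ⟨_, hz2⟩
    simp only [mem_ball, dist_zero_right, not_lt] at hz2
    intro h; rw [h] at hz2; simp at hz2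
    exact absurd hz2 (by norm_num)
  have hKcomp : IsCompact K := (isCompact_closedBall 0 _).diff isOpen_ball
  have hψcont : ContinuousOn ψ K := by
    intro z hz
    exact (hψat z (hKsub hz)).continuousAt.continuousWithinAt
  obtain ⟨M, hM⟩ := hKcomp.exists_bound_of_continuousOn hψcont
  have hbnd : ∀ z : ℂ, z ≠ 0 → ‖ψ z‖ ≤ M := by
    intro z hz
    have habs : 0 < Complex.abs z := by
      simpa [Complex.abs.pos_iff] using hz
    obtain ⟨n, hn1, hn2⟩ := exists_mem_Ico_zpow habs hq
    have hqpos : (0:ℝ) < Complex.abs q := by linarith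
    have hmem : q ^ (-n) * z ∈ K := by
      have habs2 : Complex.abs (q ^ (-n) * z) = (Complex.abs q) ^ (-n) * Complex.abs z := by
        rw [map_mul, map_zpow₀]
      have e4 : (Complex.abs q) ^ (-n) * (Complex.abs q) ^ (n+1) = Complex.abs q := by
        rw [← zpow_add₀ hqpos.ne']; norm_num
      have e5 : (Complex.abs q) ^ (-n) * (Complex.abs q) ^ n = 1 := by
        rw [← zpow_add₀ hqpos.ne']; norm_num
      constructor
      · simp only [mem_closedBall, dist_zero_right, Complex.norm_eq_abs]
        rw [habs2]
        calc Complex.abs q ^ (-n) * Complex.abs z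
            ≤ Complex.abs q ^ (-n) * Complex.abs q ^ (n+1) :=
              (mul_lt_mul_of_pos_left hn2 (zpow_pos hqpos _)).le
          _ = Complex.abs q := e4
      · simp only [mem_ball, dist_zero_right, Complex.norm_eq_abs, not_lt]
        rw [habs2]
        calc (1:ℝ) = Complex.abs q ^ (-n) * Complex.abs q ^ n := e5.symm
          _ ≤ Complex.abs q ^ (-n) * Complex.abs z :=
              mul_le_mul_of_nonneg_left hn1 (zpow_pos hqpos _).le
    have := hψzpow (-n) z hz
    rw [← this]
    exact hM _ hmem
  -- Liouville
  set Φ : ℂ → ℂ := fun t => ψ (Complex.exp t) with hΦdef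
  have hΦdiff : Differentiable ℂ Φ := by
    intro t
    exact (hψat _ (Complex.exp_ne_zero t)).comp t (Complex.differentiable_exp t)
  have hΦbdd : Bornology.IsBounded (Set.range Φ) := by
    rw [isBounded_iff_forall_norm_le]
    exact ⟨M, by rintro x ⟨t, rfl⟩; exact hbnd _ (Complex.exp_ne_zero t)⟩
  have hψconst : ∀ z : ℂ, z ≠ 0 → ψ z = ψ 1 := by
    intro z hz
    have h1 : ψ z = Φ (Complex.log z) := by rw [hΦdef]; simp [Complex.exp_log hz]
    have h2 : Φ (Complex.log z) = Φ 0 := hΦdiff.apply_eq_apply_of_bounded hΦbdd _ _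
    rw [h1, h2]
    simp only [hΦdef, Complex.exp_zero]
  set a : ℂ := ψ 1 with ha
  have key : ∀ z : ℂ, z ≠ 0 → z * deriv w z = a * w z := by
    intro z hz
    have h : ψ z = a := hψconst z hz
    have h2 : ψ z * w z = a * w z := by rw [h]
    simp only [hψ] at h2
    rwa [div_mul_cancel₀ _ (hwne z hz)] at h2
  -- solve the ODE along the exponential
  set W : ℂ → ℂ := fun t => w (Complex.exp t) with hWdef
  have hW : ∀ t : ℂ, HasDerivAt W (a * W t) t := by
    intro t
    have hout : HasDerivAt w (deriv w (Complex.exp t)) (Complex.exp t) :=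
      (hwat _ (Complex.exp_ne_zero t)).hasDerivAt
    have hin : HasDerivAt Complex.exp (Complex.exp t) t := Complex.hasDerivAt_exp t
    have hcomp : HasDerivAt W (deriv w (Complex.exp t) * Complex.exp t) t :=
      HasDerivAt.comp t hout hin
    have : deriv w (Complex.exp t) * Complex.exp t = a * W t := by
      have := key (Complex.exp t) (Complex.exp_ne_zero t)
      rw [hWdef]
      rw [mul_comm] at this
      rw [this]
    rwa [this] at hcomp
  set V : ℂ → ℂ := fun t => W t * Complex.exp (-(a * t)) with hVdef
  have hV : ∀ t : ℂ, HasDerivAt V 0 t := by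
    intro t
    have h2in : HasDerivAt (fun s : ℂ => -(a * s)) (-a) t := by
      simpa using ((hasDerivAt_id t).const_mul a).fun_neg
    have h2 : HasDerivAt (fun s : ℂ => Complex.exp (-(a * s)))
        (Complex.exp (-(a * t)) * (-a)) t :=
      HasDerivAt.comp t (Complex.hasDerivAt_exp _) h2in
    have h3 := (hW t).mul h2
    have : a * W t * Complex.exp (-(a * t)) + W t * (Complex.exp (-(a * t)) * -a) = 0 := by
      ring
    rwa [this] at h3
  have hVconst : ∀ t : ℂ, V t = V 0 := by
    intro t
    exact is_const_of_deriv_eq_zero (fun s => (hV s).differentiableAt) (fun s => (hV s).deriv) t 0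
  have hV0 : V 0 = w 1 := by
    simp [hVdef, hWdef]
  have hWt : ∀ t : ℂ, W t = w 1 * Complex.exp (a * t) := by
    intro t
    have h := hVconst t
    rw [hV0] at h
    simp only [hVdef] at h
    calc W t = W t * Complex.exp (-(a * t)) * Complex.exp (a * t) := by
          rw [mul_assoc, ← Complex.exp_add]; simp
      _ = w 1 * Complex.exp (a * t) := by rw [h]
  -- periodicity forces a ∈ ℤ
  have hper : Complex.exp (a * (2 * Real.pi * I)) = 1 := by
    have h1 : W (2 * Real.pi * I) = w 1 := by
      rw [hWdef]; simp [Complex.exp_two_pi_mul_I]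
    rw [hWt (2 * Real.pi * I)] at h1
    have hw1 : w 1 ≠ 0 := hwne 1 one_ne_zero
    field_simp at h1
    convert h1 using 2; ring
  obtain ⟨m, hm⟩ := Complex.exp_eq_one_iff.mp hper
  have ham : a = (m : ℂ) := by
    have h2pi : (2 * (Real.pi : ℂ) * I) ≠ 0 := by
      simp [Real.pi_ne_zero, Complex.I_ne_zero]
    field_simp at hm
    exact hm
  refine ⟨m, ?_⟩
  -- evaluate the relation at z = q
  have hq1 : w q = lam * w 1 := by
    have := hrel q hq0
    rwa [inv_mul_cancel₀ hq0] at this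
  have hq2 : w q = w 1 * Complex.exp (a * Complex.log q) := by
    have h := hWt (Complex.log q)
    simp only [hWdef] at h
    rwa [Complex.exp_log hq0] at h
  have hw1 : w 1 ≠ 0 := hwne 1 one_ne_zero
  have : lam = Complex.exp (a * Complex.log q) := by
    have h := hq1.symm.trans hq2
    rw [mul_comm (w 1)] at h
    exact mul_right_cancel₀ hw1 h
  rw [this, ham, Complex.exp_int_mul, Complex.exp_log hq0]

lemma laurent_split {f : ℂ → ℂ} (hf : DifferentiableOn ℂ f {z : ℂ | z ≠ 0}) :
    ∃ ψ₁ ψ₂ : ℂ → ℂ, Differentiable ℂ ψ₁ ∧ Differentiable ℂ ψ₂ ∧ ψ₂ 0 = 0 ∧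
      ∀ z : ℂ, z ≠ 0 → f z = ψ₁ z + ψ₂ z⁻¹ := by
  have hopen : IsOpen {z : ℂ | z ≠ 0} := isOpen_ne
  have hfat : ∀ z : ℂ, z ≠ 0 → DifferentiableAt ℂ f z :=
    fun z hz => hf.differentiableAt (hopen.mem_nhds hz)
  have hcont : ContinuousOn f {z : ℂ | z ≠ 0} := hf.continuousOn
  have hsph : ∀ R : ℝ, 0 < R → sphere (0:ℂ) R ⊆ {z : ℂ | z ≠ 0} := by
    intro R hR z hz
    simp only [mem_sphere, dist_zero_right] at hz
    intro h; rw [h] at hz; simp at hz; linarith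
  have hint : ∀ R : ℝ, 0 < R → CircleIntegrable f 0 R :=
    fun R hR => (hcont.mono (hsph R hR)).circleIntegrable hR.le
  -- integrability of the Cauchy kernel against f
  have hker : ∀ (z : ℂ) (R : ℝ), 0 < R → R ≠ Complex.abs z →
      CircleIntegrable (fun ζ => (ζ - z)⁻¹ • f ζ) 0 R := by
    intro z R hR hne
    apply ContinuousOn.circleIntegrable hR.le
    apply ContinuousOn.fun_smul
    · apply ContinuousOn.inv₀ (continuousOn_id.sub continuousOn_const)
      intro ζ hζ
      simp only [mem_sphere, dist_zero_right] at hζ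
      intro h
      replace h : ζ = z := sub_eq_zero.1 h
      apply hne
      rw [← h, ← Complex.norm_eq_abs]
      exact hζ.symm
    · exact hcont.mono (hsph R hR)
  -- independence of radius where the kernel is holomorphic
  have hcons : ∀ (z : ℂ) (r R : ℝ), 0 < r → r ≤ R →
      (∀ ζ : ℂ, r ≤ Complex.abs ζ → Complex.abs ζ ≤ R → ζ ≠ z) →
      (∮ ζ in C(0, R), (ζ - z)⁻¹ • f ζ) = ∮ ζ in C(0, r), (ζ - z)⁻¹ • f ζ := by
    intro z r R hr hrR hz
    apply Complex.circleIntegral_eq_of_differentiable_on_annulus_off_countable hr hrR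
      countable_empty
    · intro ζ hζ
      simp only [mem_diff, mem_closedBall, mem_ball, dist_zero_right, not_lt,
        Complex.norm_eq_abs] at hζ
      have hζ0 : ζ ≠ 0 := by
        intro h; rw [h] at hζ; simp at hζ; linarith [hζ.2]
      have hζz : ζ ≠ z := hz ζ (by simpa using hζ.2) (by simpa using hζ.1)
      apply ContinuousWithinAt.fun_smul
      · exact (((continuousAt_id.sub continuousAt_const).inv₀
          (sub_ne_zero.2 hζz))).continuousWithinAt
      · exact ((hcont.continuousAt (hopen.mem_nhds hζ0))).continuousWithinAt
    · intro ζ hζ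
      simp only [mem_diff, mem_ball, mem_closedBall, dist_zero_right, not_le,
        mem_empty_iff_false, not_false_eq_true, and_true, Complex.norm_eq_abs] at hζ
      have hζ0 : ζ ≠ 0 := by
        intro h; rw [h] at hζ; simp at hζ; linarith [hζ.2]
      have hζz : ζ ≠ z := hz ζ hζ.2.le hζ.1.le
      exact ((differentiableAt_id.sub_const z).inv (sub_ne_zero.2 hζz)).smul (hfat ζ hζ0)
  -- the "entire part" of f
  set F1 : ℂ → ℂ :=
    fun z => (2 * Real.pi * I : ℂ)⁻¹ • ∮ ζ in C(0, Complex.abs z + 1), (ζ - z)⁻¹ • f ζ with hF1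
  have hF1R : ∀ (z : ℂ) (R : ℝ), Complex.abs z < R →
      F1 z = (2 * Real.pi * I : ℂ)⁻¹ • ∮ ζ in C(0, R), (ζ - z)⁻¹ • f ζ := by
    intro z R hR
    have habs : (0:ℝ) ≤ Complex.abs z := (Complex.abs.nonneg z)
    simp only [hF1]
    congr 1
    rcases le_total (Complex.abs z + 1) R with h | h
    · refine (hcons z (Complex.abs z + 1) R (by positivity) h fun ζ h1 h2 => ?_).symm
      intro he; rw [he] at h1; linarith
    · refine hcons z R (Complex.abs z + 1) (by linarith) h fun ζ h1 h2 => ?_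
      intro he; rw [he] at h1; linarith
  have hF1diff : Differentiable ℂ F1 := by
    intro z₀
    have habs : (0:ℝ) ≤ Complex.abs z₀ := Complex.abs.nonneg z₀
    set R : NNReal := ⟨Complex.abs z₀ + 2, by positivity⟩ with hRdef
    have hR0 : 0 < R := by
      rw [← NNReal.coe_lt_coe]
      show (0:ℝ) < Complex.abs z₀ + 2
      positivity
    have hRcoe : (R : ℝ) = Complex.abs z₀ + 2 := rfl
    have hball := hasFPowerSeriesOn_cauchy_integral
      (f := f) (c := 0) (R := R) (hint R (by rw [hRcoe]; positivity)) hR0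
    have hGdiff : DifferentiableAt ℂ
        (fun w => (2 * Real.pi * I : ℂ)⁻¹ • ∮ ζ in C(0, (R:ℝ)), (ζ - w)⁻¹ • f ζ) z₀ := by
      apply hball.differentiableOn.differentiableAt
      apply EMetric.isOpen_ball.mem_nhds
      rw [Metric.emetric_ball_nnreal]
      simp only [mem_ball, dist_zero_right, Complex.norm_eq_abs, hRcoe]
      linarith
    apply hGdiff.congr_of_eventuallyEq
    have hmem : z₀ ∈ ball (0:ℂ) (Complex.abs z₀ + 1) := by
      simp only [mem_ball, dist_zero_right, Complex.norm_eq_abs]; linarith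
    filter_upwards [isOpen_ball.mem_nhds hmem] with z hz
    apply hF1R
    simp only [mem_ball, dist_zero_right, Complex.norm_eq_abs] at hz
    rw [hRcoe]; linarith
  -- the "principal part" of f, as a function of w = z⁻¹
  set F2 : ℂ → ℂ := fun w =>
    -((2 * Real.pi * I : ℂ)⁻¹ • ∮ ζ in C(0, (2 * Complex.abs w)⁻¹), (ζ - w⁻¹)⁻¹ • f ζ) with hF2
  have hF20 : F2 0 = 0 := by
    simp only [hF2, map_zero, mul_zero, inv_zero, circleIntegral.integral_radius_zero,
      smul_zero, neg_zero]
  have hF2r : ∀ (w : ℂ), w ≠ 0 → ∀ r : ℝ, 0 < r → r < (Complex.abs w)⁻¹ →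
      F2 w = -((2 * Real.pi * I : ℂ)⁻¹ • ∮ ζ in C(0, r), (ζ - w⁻¹)⁻¹ • f ζ) := by
    intro w hw r hr hrw
    have habsw : 0 < Complex.abs w := by
      simpa [Complex.abs.pos_iff] using hw
    have habsinv : Complex.abs (w⁻¹) = (Complex.abs w)⁻¹ := map_inv₀ _ _
    have h2w : (0:ℝ) < (2 * Complex.abs w)⁻¹ := by positivity
    have h2w' : (2 * Complex.abs w)⁻¹ < (Complex.abs w)⁻¹ := by
      rw [inv_lt_inv₀ (by positivity) habsw]
      linarith
    simp only [hF2]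
    congr 2
    rcases le_total r ((2 * Complex.abs w)⁻¹) with h | h
    · refine hcons (w⁻¹) r _ hr h fun ζ h1 h2 => ?_
      intro he; rw [he, habsinv] at h2; linarith
    · refine (hcons (w⁻¹) _ r h2w h fun ζ h1 h2 => ?_).symm
      intro he; rw [he, habsinv] at h2; linarith
  -- the Cauchy integral formula on the annulus: f = F1 + F2 ∘ inv
  have hid : ∀ z : ℂ, z ≠ 0 → f z = F1 z + F2 z⁻¹ := by
    intro z hz
    have habs : 0 < Complex.abs z := by simpa [Complex.abs.pos_iff] using hz
    set r : ℝ := Complex.abs z / 2 with hrdef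
    set R : ℝ := Complex.abs z + 1 with hRdef
    have hr0 : 0 < r := by rw [hrdef]; positivity
    have hrR : r ≤ R := by rw [hrdef, hRdef]; linarith
    have hzR : Complex.abs z < R := by rw [hRdef]; linarith
    have hrz : r < Complex.abs z := by rw [hrdef]; linarith
    -- Goursat for the difference quotient on the annulus
    have hgours : (∮ ζ in C(0, R), dslope f z ζ) = ∮ ζ in C(0, r), dslope f z ζ := by
      apply Complex.circleIntegral_eq_of_differentiable_on_annulus_off_countable hr0 hrR
        (countable_singleton z)
      · intro ζ hζ
        simp only [mem_diff, mem_closedBall, mem_ball, dist_zero_right, not_lt,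
          Complex.norm_eq_abs] at hζ
        have hζ0 : ζ ≠ 0 := by
          intro h; rw [h] at hζ; simp at hζ; linarith [hζ.2]
        by_cases hζz : ζ = z
        · subst hζz
          exact (continuousAt_dslope_same.2 (hfat ζ hζ0)).continuousWithinAt
        · exact (((differentiableAt_dslope_of_ne hζz).2 (hfat ζ hζ0)).continuousAt
            ).continuousWithinAt
      · intro ζ hζ
        simp only [mem_diff, mem_ball, mem_closedBall, dist_zero_right, not_le,
          Complex.norm_eq_abs, mem_singleton_iff] at hζ
        have hζ0 : ζ ≠ 0 := by
          intro h; rw [h] at hζ; simp at hζ; linarith [hζ.1.2]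
        exact (differentiableAt_dslope_of_ne hζ.2).2 (hfat ζ hζ0)
    -- rewrite the two integrals of the difference quotient
    have hsphR : ∀ ζ : ℂ, ζ ∈ sphere (0:ℂ) R → ζ ≠ z := by
      intro ζ hζ
      simp only [mem_sphere, dist_zero_right, Complex.norm_eq_abs] at hζ
      intro he; rw [he] at hζ; rw [hζ] at hzR; linarith
    have hsphr : ∀ ζ : ℂ, ζ ∈ sphere (0:ℂ) r → ζ ≠ z := by
      intro ζ hζ
      simp only [mem_sphere, dist_zero_right, Complex.norm_eq_abs] at hζ
      intro he; rw [he] at hζ; rw [hζ] at hrz; linarith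
    have hcongr : ∀ ρ : ℝ, 0 ≤ ρ → (∀ ζ : ℂ, ζ ∈ sphere (0:ℂ) ρ → ζ ≠ z) →
        (∮ ζ in C(0, ρ), dslope f z ζ)
          = (∮ ζ in C(0, ρ), ((ζ - z)⁻¹ • f ζ - (ζ - z)⁻¹ • f z)) := by
      intro ρ hρ hzρ
      apply circleIntegral.integral_congr hρ
      intro ζ hζ
      have hζz : ζ ≠ z := hzρ ζ hζ
      rw [dslope_of_ne f hζz, slope_def_field]
      simp only [smul_eq_mul]
      rw [div_eq_inv_mul, mul_sub]
    have hsplit : ∀ ρ : ℝ, 0 < ρ → ρ ≠ Complex.abs z → (∀ ζ : ℂ, ζ ∈ sphere (0:ℂ) ρ → ζ ≠ z) →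
        (∮ ζ in C(0, ρ), dslope f z ζ)
          = (∮ ζ in C(0, ρ), (ζ - z)⁻¹ • f ζ) - (∮ ζ in C(0, ρ), (ζ - z)⁻¹) • f z := by
      intro ρ hρ hρz hzρ
      rw [hcongr ρ hρ.le hzρ]
      rw [circleIntegral.integral_sub (hker z ρ hρ hρz)]
      · rw [circleIntegral.integral_smul_const]
      · apply ContinuousOn.circleIntegrable hρ.le
        apply ContinuousOn.fun_smul _ continuousOn_const
        apply ContinuousOn.inv₀ (continuousOn_id.sub continuousOn_const)
        intro ζ hζ
        exact sub_ne_zero.2 (hzρ ζ hζ)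
    have houter : (∮ ζ in C(0, R), dslope f z ζ)
        = (∮ ζ in C(0, R), (ζ - z)⁻¹ • f ζ) - (2 * Real.pi * I : ℂ) • f z := by
      rw [hsplit R (by linarith) (by linarith) hsphR]
      congr 2
      apply circleIntegral.integral_sub_inv_of_mem_ball
      simp only [mem_ball, dist_zero_right, Complex.norm_eq_abs]
      exact hzR
    have hinner : (∮ ζ in C(0, r), dslope f z ζ) = (∮ ζ in C(0, r), (ζ - z)⁻¹ • f ζ) := by
      rw [hsplit r hr0 (by linarith) hsphr]
      have : (∮ ζ in C(0, r), (ζ - z)⁻¹) = 0 := by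
        apply Complex.circleIntegral_eq_zero_of_differentiable_on_off_countable hr0.le
          countable_empty
        · intro ζ hζ
          simp only [mem_closedBall, dist_zero_right, Complex.norm_eq_abs] at hζ
          have : ζ ≠ z := by
            intro he; rw [he] at hζ; linarith
          exact ((continuousAt_id.sub continuousAt_const).inv₀
            (sub_ne_zero.2 this)).continuousWithinAt
        · intro ζ hζ
          simp only [mem_ball, dist_zero_right, Complex.norm_eq_abs, diff_empty] at hζ
          have : ζ ≠ z := by
            intro he; rw [he] at hζ; linarith
          exact (differentiableAt_id.sub_const z).inv (sub_ne_zero.2 this)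
      rw [this, zero_smul, sub_zero]
    -- assemble
    have hmain : (∮ ζ in C(0, R), (ζ - z)⁻¹ • f ζ) - (2 * Real.pi * I : ℂ) • f z
        = ∮ ζ in C(0, r), (ζ - z)⁻¹ • f ζ := by
      rw [← houter, ← hinner]; exact hgours
    have hF1z : F1 z = (2 * Real.pi * I : ℂ)⁻¹ • ∮ ζ in C(0, R), (ζ - z)⁻¹ • f ζ :=
      hF1R z R hzR
    have hF2z : F2 z⁻¹ = -((2 * Real.pi * I : ℂ)⁻¹ • ∮ ζ in C(0, r), (ζ - z)⁻¹ • f ζ) := by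
      have hinv : (z⁻¹)⁻¹ = z := inv_inv z
      have h1 := hF2r z⁻¹ (inv_ne_zero hz) r hr0 (by rw [map_inv₀, inv_inv]; exact hrz)
      rw [hinv] at h1
      exact h1
    rw [hF1z, hF2z]
    rw [← hmain]
    rw [smul_sub, smul_smul, inv_mul_cancel₀ Complex.two_pi_I_ne_zero, one_smul]
    ring
  -- differentiability of F2 away from 0
  have hF2eq : ∀ w : ℂ, w ≠ 0 → F2 w = f w⁻¹ - F1 w⁻¹ := by
    intro w hw
    have h := hid w⁻¹ (inv_ne_zero hw)
    rw [inv_inv] at h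
    rw [h]; ring
  have hF2at : ∀ w : ℂ, w ≠ 0 → DifferentiableAt ℂ F2 w := by
    intro w hw
    have hdiff : DifferentiableAt ℂ (fun x : ℂ => f x⁻¹ - F1 x⁻¹) w := by
      have hinv : DifferentiableAt ℂ (fun x : ℂ => x⁻¹) w := differentiableAt_id.inv hw
      exact ((hfat w⁻¹ (inv_ne_zero hw)).comp w hinv).sub ((hF1diff w⁻¹).comp w hinv)
    apply hdiff.congr_of_eventuallyEq
    filter_upwards [hopen.mem_nhds hw] with x hx
    exact hF2eq x hx
  -- bound for F2 near 0
  obtain ⟨Mf, hMf⟩ := (isCompact_sphere (0:ℂ) 1).exists_bound_of_continuousOn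
    (hcont.mono (hsph 1 one_pos))
  have hMf0 : 0 ≤ Mf := le_trans (norm_nonneg _) (hMf 1 (by simp))
  set K2 : ℝ := ‖(2 * Real.pi * I : ℂ)⁻¹‖ * (2 * Real.pi * ((4/3) * Mf)) with hK2
  have hK20 : 0 ≤ K2 := by
    rw [hK2]
    have := Real.pi_pos
    positivity
  have hF2bnd : ∀ w : ℂ, w ≠ 0 → Complex.abs w ≤ 1/4 → ‖F2 w‖ ≤ K2 * Complex.abs w := by
    intro w hw hw4
    have habsw : 0 < Complex.abs w := by simpa [Complex.abs.pos_iff] using hw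
    have hinvw : (4:ℝ) ≤ (Complex.abs w)⁻¹ := by
      rw [le_inv_comm₀ (by norm_num) habsw]
      linarith
    have h1 : F2 w = -((2 * Real.pi * I : ℂ)⁻¹ • ∮ ζ in C(0, 1), (ζ - w⁻¹)⁻¹ • f ζ) :=
      hF2r w hw 1 one_pos (by linarith)
    have hbint : ‖∮ ζ in C(0, 1), (ζ - w⁻¹)⁻¹ • f ζ‖ ≤ 2 * Real.pi * 1 * ((4/3) * Mf * Complex.abs w) := by
      apply circleIntegral.norm_integral_le_of_norm_le_const zero_le_one
      intro ζ hζ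
      simp only [mem_sphere, dist_zero_right, Complex.norm_eq_abs] at hζ
      have hlow : (4/3 : ℝ) * Complex.abs w ≥ (Complex.abs (ζ - w⁻¹))⁻¹ := by
        have h2 : Complex.abs (ζ - w⁻¹) ≥ (Complex.abs w)⁻¹ - 1 := by
          have h := norm_sub_norm_le (w⁻¹) ζ
          simp only [Complex.norm_eq_abs, map_inv₀] at h
          rw [hζ] at h
          calc (Complex.abs w)⁻¹ - 1 ≤ Complex.abs (w⁻¹ - ζ) := h
            _ = Complex.abs (ζ - w⁻¹) := by rw [AbsoluteValue.map_sub]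
        have h3 : (Complex.abs w)⁻¹ - 1 ≥ (3/4) * (Complex.abs w)⁻¹ := by
          have : (1/4 : ℝ) * (Complex.abs w)⁻¹ ≥ 1 := by linarith
          linarith
        have h4 : (0:ℝ) < (3/4) * (Complex.abs w)⁻¹ := by positivity
        have h5 : Complex.abs (ζ - w⁻¹) ≥ (3/4) * (Complex.abs w)⁻¹ := by linarith
        calc (Complex.abs (ζ - w⁻¹))⁻¹ ≤ ((3/4) * (Complex.abs w)⁻¹)⁻¹ := by
              apply inv_anti₀ h4 h5
          _ = (4/3) * Complex.abs w := by
              rw [mul_inv, inv_inv]; norm_num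
      have hf0 : ζ ≠ 0 := by
        intro h; rw [h] at hζ; simp at hζ
      calc ‖(ζ - w⁻¹)⁻¹ • f ζ‖ = (Complex.abs (ζ - w⁻¹))⁻¹ * ‖f ζ‖ := by
            rw [norm_smul]; simp [Complex.norm_eq_abs, map_inv₀]
        _ ≤ ((4/3) * Complex.abs w) * Mf := by
            apply mul_le_mul hlow (hMf ζ (by simp [mem_sphere, dist_zero_right, hζ, Complex.norm_eq_abs])) (norm_nonneg _)
            positivity
        _ = (4/3) * Mf * Complex.abs w := by ring
    rw [h1]
    rw [norm_neg, norm_smul]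
    calc ‖(2 * Real.pi * I : ℂ)⁻¹‖ * ‖∮ ζ in C(0, 1), (ζ - w⁻¹)⁻¹ • f ζ‖
        ≤ ‖(2 * Real.pi * I : ℂ)⁻¹‖ * (2 * Real.pi * 1 * ((4/3) * Mf * Complex.abs w)) := by
          apply mul_le_mul_of_nonneg_left hbint (norm_nonneg _)
      _ = K2 * Complex.abs w := by rw [hK2]; ring
  -- F2 tends to 0 at 0
  have hF2tend : Filter.Tendsto F2 (nhdsWithin (0:ℂ) {(0:ℂ)}ᶜ) (nhds 0) := by
    apply squeeze_zero_norm' (a := fun w => K2 * Complex.abs w)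
    · filter_upwards [self_mem_nhdsWithin,
        nhdsWithin_le_nhds (Metric.closedBall_mem_nhds (0:ℂ) (show (0:ℝ) < 1/4 by norm_num))]
        with w hw1 hw2
      simp only [mem_compl_iff, mem_singleton_iff] at hw1
      simp only [mem_closedBall, dist_zero_right, Complex.norm_eq_abs] at hw2
      exact hF2bnd w hw1 hw2
    · have : Filter.Tendsto (fun w : ℂ => K2 * Complex.abs w) (nhds 0) (nhds (K2 * Complex.abs 0)) := by
        exact (Complex.continuous_abs.const_smul K2).tendsto 0
      rw [map_zero, mul_zero] at this
      exact this.mono_left nhdsWithin_le_nhds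
  -- littleO condition for the removable singularity
  have hlittle : (fun w : ℂ => F2 w - F2 0) =o[nhdsWithin (0:ℂ) {(0:ℂ)}ᶜ]
      fun w : ℂ => (w - 0)⁻¹ := by
    rw [Asymptotics.isLittleO_iff]
    intro c hc
    have hδ : (0:ℝ) < min (1/4) (c / (K2 + 1)) := by
      apply lt_min (by norm_num)
      positivity
    filter_upwards [self_mem_nhdsWithin,
      nhdsWithin_le_nhds (Metric.closedBall_mem_nhds (0:ℂ) hδ)] with w hw1 hw2
    simp only [mem_compl_iff, mem_singleton_iff] at hw1
    simp only [mem_closedBall, dist_zero_right, Complex.norm_eq_abs] at hw2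
    have hw14 : Complex.abs w ≤ 1/4 := le_trans hw2 (min_le_left _ _)
    have hwc : Complex.abs w ≤ c / (K2 + 1) := le_trans hw2 (min_le_right _ _)
    have habsw : 0 < Complex.abs w := by simpa [Complex.abs.pos_iff] using hw1
    rw [hF20, sub_zero, sub_zero]
    have h1 : ‖F2 w‖ ≤ K2 * Complex.abs w := hF2bnd w hw1 hw14
    have h2 : K2 * Complex.abs w ≤ c := by
      calc K2 * Complex.abs w ≤ K2 * (c / (K2 + 1)) := by
            apply mul_le_mul_of_nonneg_left hwc hK20
        _ ≤ (K2 + 1) * (c / (K2 + 1)) := by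
            apply mul_le_mul_of_nonneg_right (by linarith) (by positivity)
        _ = c := by field_simp
    have h3 : (1:ℝ) ≤ ‖w⁻¹‖ := by
      rw [Complex.norm_eq_abs, map_inv₀]
      rw [le_inv_comm₀ one_pos habsw]
      linarith
    calc ‖F2 w‖ ≤ c := le_trans h1 h2
      _ = c * 1 := by ring
      _ ≤ c * ‖w⁻¹‖ := by
          apply mul_le_mul_of_nonneg_left h3 hc.le
  -- remove the singularity
  have hupd : DifferentiableOn ℂ
      (Function.update F2 0 (Filter.limUnder (nhdsWithin (0:ℂ) {(0:ℂ)}ᶜ) F2)) univ := by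
    apply Complex.differentiableOn_update_limUnder_of_isLittleO Filter.univ_mem
    · intro w hw
      have hw0 : w ≠ 0 := by
        simp only [mem_diff, mem_singleton_iff] at hw
        exact hw.2
      exact (hF2at w hw0).differentiableWithinAt
    · exact hlittle
  have hlim : Filter.limUnder (nhdsWithin (0:ℂ) {(0:ℂ)}ᶜ) F2 = 0 := hF2tend.limUnder_eq
  have hupd2 : Function.update F2 0 (Filter.limUnder (nhdsWithin (0:ℂ) {(0:ℂ)}ᶜ) F2) = F2 := by
    rw [hlim]
    funext x
    rcases eq_or_ne x 0 with rfl | hx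
    · rw [Function.update_self, hF20]
    · rw [Function.update_of_ne hx]
  rw [hupd2] at hupd
  refine ⟨F1, F2, hF1diff, differentiableOn_univ.mp hupd, hF20, hid⟩


/-- Classification of degree-zero holomorphic line bundles on `E_q = ℂ*/qℤ` (`|q| > 1`):
(i) every nonvanishing holomorphic `g : ℂ* → ℂ*` admitting a holomorphic logarithm can be
written as `g(z) = c·u(z)·u(q⁻¹z)⁻¹` for a constant `c ∈ ℂ*` and a nonvanishing
holomorphic `u`; (ii) two constants `c, c' ∈ ℂ*` are related by such a twist,
`c' = c·w(z)·w(q⁻¹z)⁻¹`, iff `c'/c ∈ qℤ`. -/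
theorem line_bundles_on_elliptic_curve (q : ℂ) (hq : 1 < ‖q‖)
    (g f : ℂ → ℂ) (hf : DifferentiableOn ℂ f {z : ℂ | z ≠ 0})
    (hgf : ∀ z : ℂ, z ≠ 0 → g z = Complex.exp (f z)) :
    (∃ (u : ℂ → ℂ) (c : ℂ), c ≠ 0 ∧
      DifferentiableOn ℂ u {z : ℂ | z ≠ 0} ∧ (∀ z : ℂ, z ≠ 0 → u z ≠ 0) ∧
      ∀ z : ℂ, z ≠ 0 → g z = c * u z * (u (q⁻¹ * z))⁻¹) ∧
    (∀ c c' : ℂ, c ≠ 0 → c' ≠ 0 →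
      ((∃ w : ℂ → ℂ, DifferentiableOn ℂ w {z : ℂ | z ≠ 0} ∧
          (∀ z : ℂ, z ≠ 0 → w z ≠ 0) ∧
          ∀ z : ℂ, z ≠ 0 → c' = c * w z * (w (q⁻¹ * z))⁻¹) ↔
        ∃ m : ℤ, c' / c = q ^ m)) := by
  have hq0 : q ≠ 0 := by
    intro h; rw [h, norm_zero] at hq; linarith
  constructor
  · -- part (i)
    obtain ⟨ψ₁, ψ₂, hψ₁, hψ₂, hψ₂0, hsplit⟩ := laurent_split hf
    set a₀ : ℂ := ψ₁ 0 with ha₀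
    obtain ⟨H₁, hH₁, hH₁eq⟩ := solve_coboundary hq
      (ψ := fun z => ψ₁ z - a₀) (hψ₁.sub (differentiable_const a₀)) (by simp [ha₀])
    obtain ⟨H₂, hH₂, hH₂eq⟩ := solve_coboundary hq hψ₂ hψ₂0
    set F : ℂ → ℂ := fun z => H₁ z - H₂ (q⁻¹ * z⁻¹) with hF
    have hFat : ∀ z : ℂ, z ≠ 0 → DifferentiableAt ℂ F z := by
      intro z hz
      apply DifferentiableAt.sub (hH₁ z)
      exact (hH₂ _).comp z ((differentiableAt_id.inv hz).const_mul q⁻¹)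
    have hkey : ∀ z : ℂ, z ≠ 0 → F z - F (q⁻¹ * z) = f z - a₀ := by
      intro z hz
      have e1 : (q⁻¹ * z)⁻¹ = q * z⁻¹ := by
        rw [mul_inv, inv_inv]
      have e2 : q⁻¹ * (q * z⁻¹) = z⁻¹ := inv_mul_cancel_left₀ hq0 _
      have h1 := hH₁eq z
      have h2 := hH₂eq z⁻¹
      simp only [hF, e1, e2]
      rw [hsplit z hz]
      linear_combination h1 + h2
    refine ⟨fun z => Complex.exp (F z), Complex.exp a₀, Complex.exp_ne_zero _, ?_,
      fun z hz => Complex.exp_ne_zero _, ?_⟩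
    · intro z hz
      exact ((Complex.differentiable_exp (F z)).comp z (hFat z hz)).differentiableWithinAt
    · intro z hz
      rw [hgf z hz]
      have h3 : f z = a₀ + F z + -F (q⁻¹ * z) := by
        linear_combination (hkey z hz).symm
      rw [h3, Complex.exp_add, Complex.exp_add, Complex.exp_neg]
  · -- part (ii)
    intro c c' hc hc'
    constructor
    · rintro ⟨w, hwd, hwne, hwrel⟩
      have hlam : c' / c ≠ 0 := div_ne_zero hc' hc
      have hrel : ∀ z : ℂ, z ≠ 0 → w z = (c' / c) * w (q⁻¹ * z) := by
        intro z hz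
        have h := hwrel z hz
        have hw2 : w (q⁻¹ * z) ≠ 0 := hwne _ (mul_ne_zero (inv_ne_zero hq0) hz)
        rw [h]
        field_simp
        have e : z / q = q⁻¹ * z := by ring
        rw [e, mul_div_assoc, div_self hw2, mul_one]
      exact constant_unique hq hlam hwd hwne hrel
    · rintro ⟨m, hm⟩
      refine ⟨fun z => z ^ m, ?_, ?_, ?_⟩
      · intro z hz
        exact (differentiableAt_zpow.2 (Or.inl hz)).differentiableWithinAt
      · intro z hz
        exact zpow_ne_zero m hz
      · intro z hz
        have hm' : c' = q ^ m * c := by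
          rw [div_eq_iff hc] at hm; exact hm
        simp only
        rw [hm']
        have hz' : (z : ℂ) ^ m ≠ 0 := zpow_ne_zero m hz
        have hq' : (q : ℂ) ^ m ≠ 0 := zpow_ne_zero m hq0
        rw [mul_zpow, inv_zpow]
        field_simp
end
end
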